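/- arXiv:2603.24519 — 9 statements merged into one kernel-verified Lean document; each statement's English description precedes it below -/
import Mathlib

section
/- The ℝ^k-action (τ_h) on M = N × ℝ^k is free if and only if for every x ∈ N and every T > 0 with φ_T(x) = x one has (1/T)·∫_0^T α(w(φ_s(x))) ds ≠ −1. -/
/-!
A fixed point `τ_h(x, v) = (x, v)` says exactly that `x` is periodic with period `T = α(h)` and
`h = -∫_0^T w(φ_s x) ds`. Applying `α` gives `∫_0^T α(w(φ_s x)) ds = -T`, and `T = 0` forces
`h = 0`; conversely a periodic orbit with this integral yields the fixed point of `τ_h` for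
`h = -∫_0^T w(φ_s x) ds`. Negative periods reduce to positive ones: `φ_{-T}(x) = x` as well, and
the integral of a `T`-periodic function over `[0, -T]` is minus its integral over `[0, T]`.
-/

open MeasureTheory

/-- The action of `h ∈ ℝ^k` on `M = N × ℝ^k`:
`τ_h(x, v) = (φ_{α(h)}(x), v + h + ∫_0^{α(h)} w(φ_s(x)) ds)`. -/
noncomputable def tauAct {N : Type*} {k : ℕ} (φ : ℝ → N → N)
    (w : N → EuclideanSpace ℝ (Fin k)) (α : EuclideanSpace ℝ (Fin k) →ₗ[ℝ] ℝ)
    (h : EuclideanSpace ℝ (Fin k)) (z : N × EuclideanSpace ℝ (Fin k)) :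
    N × EuclideanSpace ℝ (Fin k) :=
  (φ (α h) z.1, z.2 + h + ∫ s in (0:ℝ)..(α h), w (φ s z.1))

section

variable {N : Type*} {k : ℕ}

theorem tauAct_mk_eq_self_iff (φ : ℝ → N → N) (w : N → EuclideanSpace ℝ (Fin k))
    (α : EuclideanSpace ℝ (Fin k) →ₗ[ℝ] ℝ) (h : EuclideanSpace ℝ (Fin k)) (x : N)
    (v : EuclideanSpace ℝ (Fin k)) :
    tauAct φ w α h (x, v) = (x, v) ↔
      φ (α h) x = x ∧ h = -∫ s in (0:ℝ)..α h, w (φ s x) := by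
  simp only [tauAct, Prod.mk.injEq, add_assoc, add_eq_left, add_eq_zero_iff_eq_neg]

section Flow

variable {φ : ℝ → N → N} (hφadd : ∀ t s x, φ (t + s) x = φ t (φ s x))
include hφadd

theorem flow_neg_apply_of_apply_eq_self (hφ0 : ∀ x, φ 0 x = x) {t : ℝ} {x : N}
    (hx : φ t x = x) : φ (-t) x = x := by
  conv_lhs => rw [← hx, ← hφadd, neg_add_cancel, hφ0]

theorem intervalIntegral_flow_neg_of_apply_eq_self {E : Type*} [NormedAddCommGroup E]
    [NormedSpace ℝ E] (g : N → E) {t : ℝ} {x : N} (hx : φ t x = x) :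
    ∫ s in (0:ℝ)..-t, g (φ s x) = -∫ s in (0:ℝ)..t, g (φ s x) := by
  have hper : Function.Periodic (fun s => g (φ s x)) t := fun s => by
    simp only [hφadd, hx]
  have := hper.neg.intervalIntegral_add_eq t 0
  rw [add_neg_cancel, zero_add, intervalIntegral.integral_symm] at this
  exact this.symm

theorem exists_periodic_orbit_pos_iff (hφ0 : ∀ x, φ 0 x = x) (g : N → ℝ) :
    (∃ x T, 0 < T ∧ φ T x = x ∧ ∫ s in (0:ℝ)..T, g (φ s x) = -T) ↔
      ∃ x T, T ≠ 0 ∧ φ T x = x ∧ ∫ s in (0:ℝ)..T, g (φ s x) = -T := by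
  refine ⟨fun ⟨x, T, hT, hx, hI⟩ => ⟨x, T, hT.ne', hx, hI⟩, fun ⟨x, T, hT, hx, hI⟩ => ?_⟩
  rcases hT.lt_or_gt with hneg | hpos
  · refine ⟨x, -T, neg_pos.mpr hneg, flow_neg_apply_of_apply_eq_self hφadd hφ0 hx, ?_⟩
    rw [intervalIntegral_flow_neg_of_apply_eq_self hφadd g hx, hI]
  · exact ⟨x, T, hpos, hx, hI⟩

end Flow

theorem exists_tauAct_eq_self_ne_zero_iff (φ : ℝ → N → N) (w : N → EuclideanSpace ℝ (Fin k))
    (hw : ∀ x, Continuous fun s => w (φ s x)) (α : EuclideanSpace ℝ (Fin k) →ₗ[ℝ] ℝ) :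
    (∃ h z, tauAct φ w α h z = z ∧ ¬h = 0) ↔
      ∃ x T, T ≠ 0 ∧ φ T x = x ∧ ∫ s in (0:ℝ)..T, α (w (φ s x)) = -T := by
  have hα : ∀ x a b, α (∫ s in a..b, w (φ s x)) = ∫ s in a..b, α (w (φ s x)) := fun x a b =>
    (α.toContinuousLinearMap.intervalIntegral_comp_comm ((hw x).intervalIntegrable a b)).symm
  constructor
  · rintro ⟨h, ⟨x, v⟩, hfix, hne⟩
    obtain ⟨hx, hh⟩ := (tauAct_mk_eq_self_iff φ w α h x v).mp hfix
    refine ⟨x, α h, fun h0 => hne ?_, hx, ?_⟩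
    · rw [hh, h0, intervalIntegral.integral_same, neg_zero]
    · rw [← hα, ← neg_eq_iff_eq_neg.mpr hh, map_neg]
  · rintro ⟨x, T, hT, hx, hI⟩
    set h := -∫ s in (0:ℝ)..T, w (φ s x)
    have hαh : α h = T := by rw [map_neg, hα, hI, neg_neg]
    refine ⟨h, (x, 0), (tauAct_mk_eq_self_iff φ w α h x 0).mpr ?_, fun h0 => hT ?_⟩
    · rw [hαh]
      exact ⟨hx, rfl⟩
    · rw [← hαh, h0, map_zero]

end

theorem stmt0_general {N : Type*} [TopologicalSpace N] {k : ℕ}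
    (φ : ℝ → N → N) (hφcont : Continuous fun p : ℝ × N => φ p.1 p.2)
    (hφ0 : ∀ x, φ 0 x = x) (hφadd : ∀ t s x, φ (t + s) x = φ t (φ s x))
    (w : N → EuclideanSpace ℝ (Fin k)) (hw : Continuous w)
    (α : EuclideanSpace ℝ (Fin k) →ₗ[ℝ] ℝ) :
    (∀ (h : EuclideanSpace ℝ (Fin k)) (z : N × EuclideanSpace ℝ (Fin k)),
        tauAct φ w α h z = z → h = 0) ↔
    (∀ x : N, ∀ T : ℝ, 0 < T → φ T x = x →
        (1 / T) * ∫ s in (0:ℝ)..T, α (w (φ s x)) ≠ -1) := by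
  have hcont : ∀ x, Continuous fun s => w (φ s x) := fun x =>
    hw.comp (hφcont.comp (continuous_id.prodMk continuous_const))
  rw [← not_iff_not]
  simp only [not_forall, not_not, exists_prop]
  rw [exists_tauAct_eq_self_ne_zero_iff φ w hcont α,
    ← exists_periodic_orbit_pos_iff hφadd hφ0 (fun y => α (w y))]
  refine exists_congr fun x => exists_congr fun T => and_congr_right fun hT =>
    and_congr_right fun _ => ?_
  rw [one_div, inv_mul_eq_iff_eq_mul₀ hT.ne', mul_neg_one]

/-- The `ℝ^k`-action `(τ_h)` on `M = N × ℝ^k` is free if and only if for every `x ∈ N`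
and every `T > 0` with `φ_T(x) = x` one has `(1/T)·∫_0^T α(w(φ_s(x))) ds ≠ −1`. -/
theorem stmt0 {N : Type*} [TopologicalSpace N] {k : ℕ} (hk : 1 ≤ k)
    (φ : ℝ → N → N) (hφcont : Continuous fun p : ℝ × N => φ p.1 p.2)
    (hφ0 : ∀ x, φ 0 x = x) (hφadd : ∀ t s x, φ (t + s) x = φ t (φ s x))
    (w : N → EuclideanSpace ℝ (Fin k)) (hw : Continuous w)
    (α : EuclideanSpace ℝ (Fin k) →ₗ[ℝ] ℝ) :
    (∀ (h : EuclideanSpace ℝ (Fin k)) (z : N × EuclideanSpace ℝ (Fin k)),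
        tauAct φ w α h z = z → h = 0) ↔
    (∀ x : N, ∀ T : ℝ, 0 < T → φ T x = x →
        (1 / T) * ∫ s in (0:ℝ)..T, α (w (φ s x)) ≠ -1) :=
  stmt0_general φ hφcont hφ0 hφadd w hw α
end

section
/- Assume in addition that N is a locally compact, σ-compact metric space. Then the ℝ^k-action (τ_h) on M = N × ℝ^k is proper if and only if the map F : N × ℝ → N × N × ℝ defined by F(x, t) := (x, φ_t(x), t + ∫_0^t α(w(φ_s(x))) ds) is proper. -/
set_option maxHeartbeats 1000000


open MeasureTheory

/-- Assume `N` is a locally compact, σ-compact metric space. Then the `ℝ^k`-action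
`(τ_h)` on `M = N × ℝ^k` is proper (preimages of compact sets under
`(h, z) ↦ (τ_h(z), z)` are compact) if and only if the map
`F : N × ℝ → N × N × ℝ`, `F(x, t) = (x, φ_t(x), t + ∫_0^t α(w(φ_s(x))) ds)` is proper. -/
theorem stmt1 {N : Type*} [MetricSpace N] [LocallyCompactSpace N] [SigmaCompactSpace N]
    {k : ℕ} (hk : 1 ≤ k)
    (φ : ℝ → N → N) (hφcont : Continuous fun p : ℝ × N => φ p.1 p.2)
    (hφ0 : ∀ x, φ 0 x = x) (hφadd : ∀ t s x, φ (t + s) x = φ t (φ s x))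
    (w : N → EuclideanSpace ℝ (Fin k)) (hw : Continuous w)
    (α : EuclideanSpace ℝ (Fin k) →ₗ[ℝ] ℝ) :
    (∀ Q : Set ((N × EuclideanSpace ℝ (Fin k)) × (N × EuclideanSpace ℝ (Fin k))),
        IsCompact Q →
        IsCompact {p : EuclideanSpace ℝ (Fin k) × (N × EuclideanSpace ℝ (Fin k)) |
          (tauAct φ w α p.1 p.2, p.2) ∈ Q}) ↔
    (∀ Q : Set (N × N × ℝ), IsCompact Q →
        IsCompact {p : N × ℝ |
          (p.1, φ p.2 p.1, p.2 + ∫ s in (0:ℝ)..p.2, α (w (φ s p.1))) ∈ Q}) := by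
  -- continuity of the flow in swapped variables
  have hflow2 : Continuous fun p : N × ℝ => φ p.2 p.1 :=
    hφcont.comp (continuous_snd.prodMk continuous_fst)
  -- continuity of the parametrized integral of `w`
  have Icont : Continuous fun p : N × ℝ => ∫ s in (0:ℝ)..p.2, w (φ s p.1) :=
    intervalIntegral.continuous_parametric_primitive_of_continuous
      (f := fun x t => w (φ t x)) (hw.comp hflow2)
  -- continuity of α
  have hαc : Continuous α := α.continuous_of_finiteDimensional
  -- α commutes with the interval integral
  have hint : ∀ (x : N) (t : ℝ),
      (∫ s in (0:ℝ)..t, α (w (φ s x))) = α (∫ s in (0:ℝ)..t, w (φ s x)) := by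
    intro x t
    have hc : Continuous fun s : ℝ => w (φ s x) :=
      hw.comp (hφcont.comp (continuous_id.prodMk continuous_const))
    exact (LinearMap.toContinuousLinearMap α).intervalIntegral_comp_comm
      (hc.intervalIntegrable 0 t)
  -- continuity of the "time distortion" function g
  have gcont : Continuous fun p : N × ℝ =>
      p.2 + ∫ s in (0:ℝ)..p.2, α (w (φ s p.1)) :=
    continuous_snd.add
      (intervalIntegral.continuous_parametric_primitive_of_continuous
        (f := fun x t => α (w (φ t x))) (hαc.comp (hw.comp hflow2)))
  -- continuity of F
  have Fcont : Continuous fun p : N × ℝ =>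
      (p.1, φ p.2 p.1, p.2 + ∫ s in (0:ℝ)..p.2, α (w (φ s p.1))) :=
    continuous_fst.prodMk (hflow2.prodMk gcont)
  -- continuity of the action map (h, z) ↦ (τ_h z, z)
  have taucont : Continuous fun p : EuclideanSpace ℝ (Fin k) × (N × EuclideanSpace ℝ (Fin k)) => (tauAct φ w α p.1 p.2, p.2) := by
    have h1 : Continuous fun p : EuclideanSpace ℝ (Fin k) × (N × EuclideanSpace ℝ (Fin k)) =>
        ∫ s in (0:ℝ)..(α p.1), w (φ s p.2.1) := by
      have hfu : Continuous (Function.uncurry fun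
          (p : EuclideanSpace ℝ (Fin k) × (N × EuclideanSpace ℝ (Fin k))) (t : ℝ) =>
          w (φ t p.2.1)) :=
        hw.comp (hφcont.comp (continuous_snd.prodMk
          ((continuous_fst.comp continuous_snd).comp continuous_fst)))
      exact intervalIntegral.continuous_parametric_intervalIntegral_of_continuous
        hfu (hαc.comp continuous_fst)
    unfold tauAct
    refine Continuous.prodMk (Continuous.prodMk ?_ ?_) continuous_snd
    · exact hφcont.comp ((hαc.comp continuous_fst).prodMk
        (continuous_fst.comp continuous_snd))
    · exact ((continuous_snd.comp continuous_snd).add continuous_fst).add h1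
  constructor
  · -- action proper → F proper
    intro hA Q hQ
    by_cases hα : α = 0
    · -- trivial case α = 0 : F is proper because the third coordinate is t itself
      have hsimp : ∀ p : N × ℝ,
          p.2 + (∫ s in (0:ℝ)..p.2, α (w (φ s p.1))) = p.2 := by
        intro p; simp [hα]
      refine IsCompact.of_isClosed_subset
        (((hQ.image (by fun_prop : Continuous fun q : N × N × ℝ => q.1)).prod
          (hQ.image (by fun_prop : Continuous fun q : N × N × ℝ => q.2.2))))
        (hQ.isClosed.preimage Fcont) ?_
      rintro ⟨x, t⟩ hp
      simp only [Set.mem_setOf_eq] at hp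
      refine ⟨⟨_, hp, rfl⟩, ⟨_, hp, ?_⟩⟩
      simpa using hsimp (x, t)
    · -- main case α ≠ 0
      obtain ⟨v₀, hv₀⟩ : ∃ v₀ : EuclideanSpace ℝ (Fin k), α v₀ ≠ 0 := by
        by_contra hc
        push_neg at hc
        exact hα (LinearMap.ext fun v => by simpa using hc v)
      set u : EuclideanSpace ℝ (Fin k) := (α v₀)⁻¹ • v₀ with hu
      have hαu : α u = 1 := by
        simp [hu, α.map_smul, inv_mul_cancel₀ hv₀]
      -- the compact set in M × M used to control F-preimages
      set Q' : Set ((N × EuclideanSpace ℝ (Fin k)) × (N × EuclideanSpace ℝ (Fin k))) :=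
        (((fun q : N × N × ℝ => q.2.1) '' Q) ×ˢ
          ((fun q : N × N × ℝ => q.2.2 • u) '' Q)) ×ˢ
        ((((fun q : N × N × ℝ => q.1) '' Q)) ×ˢ ({0} : Set (EuclideanSpace ℝ (Fin k)))) with hQ'def
      have hQ' : IsCompact Q' :=
        (((hQ.image (by fun_prop : Continuous fun q : N × N × ℝ => q.2.1)).prod
          (hQ.image ((continuous_snd.comp continuous_snd).smul continuous_const)))).prod
          ((hQ.image (by fun_prop : Continuous fun q : N × N × ℝ => q.1)).prod isCompact_singleton)
      have hK' := hA Q' hQ'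
      -- the compact set of admissible times
      set T : Set ℝ := (fun p : EuclideanSpace ℝ (Fin k) × (N × EuclideanSpace ℝ (Fin k)) => α p.1) ''
        {p : EuclideanSpace ℝ (Fin k) × (N × EuclideanSpace ℝ (Fin k)) | (tauAct φ w α p.1 p.2, p.2) ∈ Q'} with hT
      have hTc : IsCompact T := hK'.image (hαc.comp continuous_fst)
      refine IsCompact.of_isClosed_subset
        ((hQ.image (by fun_prop : Continuous fun q : N × N × ℝ => q.1)).prod hTc)
        (hQ.isClosed.preimage Fcont) ?_
      rintro ⟨x, t⟩ hp
      simp only [Set.mem_setOf_eq] at hp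
      refine ⟨⟨_, hp, rfl⟩, ?_⟩
      -- construct the group element h realizing time t
      set c : ℝ := t + ∫ s in (0:ℝ)..t, α (w (φ s x)) with hc
      set I : EuclideanSpace ℝ (Fin k) := ∫ s in (0:ℝ)..t, w (φ s x) with hI
      set h : EuclideanSpace ℝ (Fin k) := c • u - I with hh
      have hαh : α h = t := by
        rw [hh, α.map_sub, α.map_smul, hαu, smul_eq_mul, mul_one, hI, ← hint x t, hc]
        ring
      have htau : tauAct φ w α h (x, 0) = (φ t x, c • u) := by
        unfold tauAct
        simp only [hαh]
        refine Prod.ext rfl ?_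
        simp only [hh, ← hI]
        abel
      have hmem : (h, ((x : N), (0 : EuclideanSpace ℝ (Fin k)))) ∈
          {p : EuclideanSpace ℝ (Fin k) × (N × EuclideanSpace ℝ (Fin k)) | (tauAct φ w α p.1 p.2, p.2) ∈ Q'} := by
        simp only [Set.mem_setOf_eq, htau, hQ'def]
        exact ⟨⟨⟨_, hp, rfl⟩, ⟨_, hp, rfl⟩⟩, ⟨_, hp, rfl⟩, rfl⟩
      have : α h ∈ T := ⟨_, hmem, rfl⟩
      rwa [hαh] at this
  · -- F proper → action proper
    intro hF Q hQ
    -- projections of Q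
    have hA : IsCompact ((fun q : (N × EuclideanSpace ℝ (Fin k)) × (N × EuclideanSpace ℝ (Fin k)) => q.2.1) '' Q) :=
      hQ.image (by fun_prop)
    have hB : IsCompact ((fun q : (N × EuclideanSpace ℝ (Fin k)) × (N × EuclideanSpace ℝ (Fin k)) => q.1.1) '' Q) :=
      hQ.image (by fun_prop)
    have hC : IsCompact ((fun q : (N × EuclideanSpace ℝ (Fin k)) × (N × EuclideanSpace ℝ (Fin k)) => α q.1.2 - α q.2.2) '' Q) :=
      hQ.image ((hαc.comp (continuous_snd.comp continuous_fst)).sub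
        (hαc.comp (continuous_snd.comp continuous_snd)))
    -- the compact F-preimage controlling (x, α h)
    set K : Set (N × ℝ) := {p : N × ℝ |
        (p.1, φ p.2 p.1, p.2 + ∫ s in (0:ℝ)..p.2, α (w (φ s p.1))) ∈
          ((fun q : (N × EuclideanSpace ℝ (Fin k)) × (N × EuclideanSpace ℝ (Fin k)) => q.2.1) '' Q) ×ˢ
          (((fun q : (N × EuclideanSpace ℝ (Fin k)) × (N × EuclideanSpace ℝ (Fin k)) => q.1.1) '' Q) ×ˢ
            ((fun q : (N × EuclideanSpace ℝ (Fin k)) × (N × EuclideanSpace ℝ (Fin k)) => α q.1.2 - α q.2.2) '' Q))} with hKdef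
    have hK : IsCompact K := hF _ (hA.prod (hB.prod hC))
    have hJ : IsCompact ((fun p : N × ℝ => ∫ s in (0:ℝ)..p.2, w (φ s p.1)) '' K) :=
      hK.image Icont
    have hD : IsCompact ((fun q : (N × EuclideanSpace ℝ (Fin k)) × (N × EuclideanSpace ℝ (Fin k)) => q.1.2 - q.2.2) '' Q) :=
      hQ.image ((continuous_snd.comp continuous_fst).sub
        (continuous_snd.comp continuous_snd))
    -- compact set containing all possible h
    set Dset : Set (EuclideanSpace ℝ (Fin k)) := (fun p : (EuclideanSpace ℝ (Fin k)) × (EuclideanSpace ℝ (Fin k)) => p.1 - p.2) ''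
      ((((fun q : (N × EuclideanSpace ℝ (Fin k)) × (N × EuclideanSpace ℝ (Fin k)) => q.1.2 - q.2.2) '' Q)) ×ˢ
        ((fun p : N × ℝ => ∫ s in (0:ℝ)..p.2, w (φ s p.1)) '' K)) with hDset
    have hDsetc : IsCompact Dset :=
      (hD.prod hJ).image (continuous_fst.sub continuous_snd)
    refine IsCompact.of_isClosed_subset
      (hDsetc.prod (hQ.image continuous_snd))
      (hQ.isClosed.preimage taucont) ?_
    rintro ⟨h, x, v⟩ hp
    simp only [Set.mem_setOf_eq, tauAct] at hp
    have hxK : ((x : N), α h) ∈ K := by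
      simp only [hKdef, Set.mem_setOf_eq, Set.mem_prod]
      refine ⟨⟨_, hp, rfl⟩, ⟨_, hp, rfl⟩, ⟨_, hp, ?_⟩⟩
      simp only
      rw [hint x (α h)]
      simp only [map_add]
      ring
    refine ⟨?_, ⟨_, hp, rfl⟩⟩
    refine ⟨((v + h + ∫ s in (0:ℝ)..(α h), w (φ s x)) - v,
      ∫ s in (0:ℝ)..(α h), w (φ s x)), ⟨⟨_, hp, rfl⟩, ⟨_, hxK, rfl⟩⟩, ?_⟩
    simp only
    abel
end

section
/- Assume in addition that N is a compact metric space. Then the map F : N × ℝ → N × N × ℝ, F(x, t) := (x, φ_t(x), t + ∫_0^t α(w(φ_s(x))) ds), is proper if and only if there exist ε > 0 and T > 0 such that |1 + (1/T)·∫_0^T α(w(φ_s(x))) ds| > ε for every x ∈ N. -/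
open MeasureTheory

section Aux

variable {N : Type*} [MetricSpace N] [CompactSpace N]

private lemma flow_orbit_cont (φ : ℝ → N → N)
    (hφcont : Continuous fun p : ℝ × N => φ p.1 p.2) (x : N) :
    Continuous fun s => φ s x :=
  hφcont.comp (continuous_id.prodMk continuous_const)

private lemma g_cont (φ : ℝ → N → N)
    (hφcont : Continuous fun p : ℝ × N => φ p.1 p.2)
    (f : N → ℝ) (hf : Continuous f) :
    Continuous fun p : N × ℝ => ∫ s in (0:ℝ)..p.2, f (φ s p.1) :=
  intervalIntegral.continuous_parametric_intervalIntegral_of_continuous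
    (f := fun (p : N × ℝ) (s : ℝ) => f (φ s p.1))
    (hf.comp (hφcont.comp ((continuous_snd).prodMk
      ((continuous_fst.comp continuous_fst) : Continuous fun q : (N × ℝ) × ℝ => q.1.1))))
    continuous_snd

private lemma g_cocycle (φ : ℝ → N → N)
    (hφcont : Continuous fun p : ℝ × N => φ p.1 p.2)
    (hφadd : ∀ t s x, φ (t + s) x = φ t (φ s x))
    (f : N → ℝ) (hf : Continuous f) (x : N) (s t : ℝ) :
    (∫ u in (0:ℝ)..(s + t), f (φ u x)) =
      (∫ u in (0:ℝ)..s, f (φ u x)) + ∫ u in (0:ℝ)..t, f (φ u (φ s x)) := by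
  have hc : Continuous fun u : ℝ => f (φ u x) :=
    hf.comp (flow_orbit_cont φ hφcont x)
  have h1 : (∫ u in (0:ℝ)..s, f (φ u x)) + (∫ u in s..(s + t), f (φ u x)) =
      ∫ u in (0:ℝ)..(s + t), f (φ u x) :=
    intervalIntegral.integral_add_adjacent_intervals
      (hc.intervalIntegrable _ _) (hc.intervalIntegrable _ _)
  have h2 : (∫ u in (0:ℝ)..t, f (φ u (φ s x))) = ∫ u in s..(s + t), f (φ u x) := by
    have h3 := intervalIntegral.integral_comp_add_right
      (a := (0:ℝ)) (b := t) (fun u => f (φ u x)) s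
    have h4 : (∫ u in (0:ℝ)..t, f (φ u (φ s x))) = ∫ u in (0:ℝ)..t, f (φ (u + s) x) := by
      congr 1
      funext u
      rw [hφadd]
    rw [h4, h3, zero_add, add_comm t s]
  rw [h2, h1]

private lemma orbit_sign (φ : ℝ → N → N)
    (hφcont : Continuous fun p : ℝ × N => φ p.1 p.2)
    (hφ0 : ∀ x, φ 0 x = x)
    (h : N → ℝ) (hh : Continuous h) (c : ℝ) (hc : 0 < c)
    (hsep : ∀ y, c < |h y|) (x : N) (hx : c < h x) (u : ℝ) :
    c < h (φ u x) := by
  by_contra hcon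
  have hneg : h (φ u x) < -c := by
    rcases lt_abs.mp (hsep (φ u x)) with h1 | h1
    · exact absurd h1 hcon
    · linarith
  set c' : ℝ → ℝ := fun v => h (φ v x) with hc'
  have hc'cont : Continuous c' := hh.comp (flow_orbit_cont φ hφcont x)
  have h0 : c' 0 = h x := by simp [hc', hφ0]
  have hmem : (0:ℝ) ∈ Set.uIcc (c' 0) (c' u) := by
    rw [Set.mem_uIcc]
    right
    constructor
    · have : c' u = h (φ u x) := rfl
      linarith
    · rw [h0]; linarith
  obtain ⟨v, _, hv⟩ := intermediate_value_uIcc (hc'cont.continuousOn (s := Set.uIcc 0 u)) hmem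
  have := hsep (φ v x)
  rw [show h (φ v x) = c' v from rfl, hv] at this
  simp at this
  linarith

private lemma g_bound (φ : ℝ → N → N)
    (hφcont : Continuous fun p : ℝ × N => φ p.1 p.2)
    (f : N → ℝ) (M : ℝ) (hM : ∀ y, |f y| ≤ M) (y : N) (a b : ℝ) :
    |∫ s in a..b, f (φ s y)| ≤ M * |b - a| := by
  have := intervalIntegral.norm_integral_le_of_norm_le_const
    (f := fun s => f (φ s y)) (a := a) (b := b) (C := M)
    (fun s _ => by simpa [Real.norm_eq_abs] using hM (φ s y))
  simpa [Real.norm_eq_abs] using this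

private lemma grow (φ : ℝ → N → N)
    (hφcont : Continuous fun p : ℝ × N => φ p.1 p.2)
    (hφ0 : ∀ x, φ 0 x = x) (hφadd : ∀ t s x, φ (t + s) x = φ t (φ s x))
    (f : N → ℝ) (hf : Continuous f)
    (M : ℝ) (hM : ∀ y, |f y| ≤ M) (ε T : ℝ) (hε : 0 < ε) (hT : 0 < T)
    (hsep : ∀ y, ε * T < |∫ s in (0:ℝ)..T, f (φ s y)|)
    (x : N) (hx : ε * T < ∫ s in (0:ℝ)..T, f (φ s x)) :
    ∀ t, 0 ≤ t → ε * t - (ε + M) * T ≤ ∫ s in (0:ℝ)..t, f (φ s x) := by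
  set h : N → ℝ := fun y => ∫ s in (0:ℝ)..T, f (φ s y) with hhdef
  have hhcont : Continuous h := by
    have h1 := (g_cont φ hφcont f hf).comp
      ((continuous_id.prodMk continuous_const : Continuous fun y : N => (y, T)))
    exact h1
  have hM0 : 0 ≤ M := le_trans (abs_nonneg _) (hM x)
  have hsign : ∀ u, ε * T < h (φ u x) :=
    orbit_sign φ hφcont hφ0 h hhcont _ (mul_pos hε hT) hsep x hx
  have hstep : ∀ n : ℕ, (n : ℝ) * (ε * T) ≤ ∫ s in (0:ℝ)..((n:ℝ) * T), f (φ s x) := by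
    intro n
    induction n with
    | zero => simp
    | succ n ih =>
      have hco := g_cocycle φ hφcont hφadd f hf x ((n:ℝ) * T) T
      have hs := hsign ((n:ℝ) * T)
      have heq : ((n:ℝ) + 1) * T = (n:ℝ) * T + T := by ring
      push_cast
      rw [heq, hco]
      have : h (φ ((n:ℝ) * T) x) = ∫ u in (0:ℝ)..T, f (φ u (φ ((n:ℝ) * T) x)) := rfl
      rw [this] at hs
      nlinarith
  intro t ht
  set n : ℕ := ⌊t / T⌋₊ with hn
  have h1 : (n : ℝ) * T ≤ t := by
    have := Nat.floor_le (div_nonneg ht hT.le)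
    calc (n:ℝ) * T ≤ (t / T) * T := by nlinarith
    _ = t := by field_simp
  have h2 : t - (n:ℝ) * T ≤ T := by
    have := Nat.lt_floor_add_one (t / T)
    have h3 : t / T < (n:ℝ) + 1 := by exact_mod_cast this
    have h4 : t < ((n:ℝ) + 1) * T := by
      calc t = (t / T) * T := by field_simp
      _ < ((n:ℝ) + 1) * T := by nlinarith
    linarith
  have hco := g_cocycle φ hφcont hφadd f hf x ((n:ℝ) * T) (t - (n:ℝ) * T)
  rw [show (n:ℝ) * T + (t - (n:ℝ) * T) = t by ring] at hco
  have hrem : |∫ u in (0:ℝ)..(t - (n:ℝ) * T), f (φ u (φ ((n:ℝ) * T) x))| ≤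
      M * |t - (n:ℝ) * T - 0| := g_bound φ hφcont f M hM _ 0 _
  have hrem' : -(M * T) ≤ ∫ u in (0:ℝ)..(t - (n:ℝ) * T), f (φ u (φ ((n:ℝ) * T) x)) := by
    have habs : |t - (n:ℝ) * T - 0| = t - (n:ℝ) * T := by
      rw [sub_zero, abs_of_nonneg]; linarith
    rw [habs] at hrem
    have := neg_abs_le (∫ u in (0:ℝ)..(t - (n:ℝ) * T), f (φ u (φ ((n:ℝ) * T) x)))
    nlinarith
  have hs := hstep n
  rw [hco]
  nlinarith

private lemma master_pos (φ : ℝ → N → N)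
    (hφcont : Continuous fun p : ℝ × N => φ p.1 p.2)
    (hφ0 : ∀ x, φ 0 x = x) (hφadd : ∀ t s x, φ (t + s) x = φ t (φ s x))
    (f : N → ℝ) (hf : Continuous f)
    (M : ℝ) (hM : ∀ y, |f y| ≤ M) (ε T : ℝ) (hε : 0 < ε) (hT : 0 < T)
    (hsep : ∀ y, ε * T < |∫ s in (0:ℝ)..T, f (φ s y)|)
    (x : N) (t : ℝ) (ht : 0 ≤ t) :
    ε * t - (ε + M) * T ≤ |∫ s in (0:ℝ)..t, f (φ s x)| := by
  rcases lt_abs.mp (hsep x) with hpos | hneg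
  · exact le_trans (grow φ hφcont hφ0 hφadd f hf M hM ε T hε hT hsep x hpos t ht)
      (le_abs_self _)
  · have hsep' : ∀ y, ε * T < |∫ s in (0:ℝ)..T, (fun z => -f z) (φ s y)| := by
      intro y
      rw [intervalIntegral.integral_neg, abs_neg]
      exact hsep y
    have hx' : ε * T < ∫ s in (0:ℝ)..T, (fun z => -f z) (φ s x) := by
      rw [intervalIntegral.integral_neg]
      exact hneg
    have := grow φ hφcont hφ0 hφadd (fun z => -f z) hf.neg M
      (fun y => by simpa using hM y) ε T hε hT hsep' x hx' t ht
    rw [intervalIntegral.integral_neg] at this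
    exact le_trans this (neg_le_abs _)

private lemma master (φ : ℝ → N → N)
    (hφcont : Continuous fun p : ℝ × N => φ p.1 p.2)
    (hφ0 : ∀ x, φ 0 x = x) (hφadd : ∀ t s x, φ (t + s) x = φ t (φ s x))
    (f : N → ℝ) (hf : Continuous f)
    (M : ℝ) (hM : ∀ y, |f y| ≤ M) (ε T : ℝ) (hε : 0 < ε) (hT : 0 < T)
    (hsep : ∀ y, ε * T < |∫ s in (0:ℝ)..T, f (φ s y)|)
    (x : N) (t : ℝ) :
    ε * |t| - (ε + M) * T ≤ |∫ s in (0:ℝ)..t, f (φ s x)| := by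
  rcases le_or_gt 0 t with ht | ht
  · rw [abs_of_nonneg ht]
    exact master_pos φ hφcont hφ0 hφadd f hf M hM ε T hε hT hsep x t ht
  · set ψ : ℝ → N → N := fun s y => φ (-s) y with hψ
    have hψcont : Continuous fun p : ℝ × N => ψ p.1 p.2 :=
      hφcont.comp ((continuous_fst.neg).prodMk continuous_snd)
    have hψ0 : ∀ y, ψ 0 y = y := by
      intro y; simp only [hψ, neg_zero]; exact hφ0 y
    have hψadd : ∀ a b y, ψ (a + b) y = ψ a (ψ b y) := by
      intro a b y
      simp only [hψ, neg_add]
      exact hφadd (-a) (-b) y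
    have key : ∀ (y : N) (u : ℝ),
        (∫ s in (0:ℝ)..u, f (ψ s y)) = -∫ s in (0:ℝ)..(-u), f (φ s y) := by
      intro y u
      have h1 := intervalIntegral.integral_comp_neg (a := (0:ℝ)) (b := u)
        (fun s => f (φ s y))
      have h2 : (∫ s in (0:ℝ)..u, f (ψ s y)) = ∫ s in (0:ℝ)..u, f (φ (-s) y) := rfl
      rw [h2, h1, neg_zero, intervalIntegral.integral_symm]
    have hsepψ : ∀ y, ε * T < |∫ s in (0:ℝ)..T, f (ψ s y)| := by
      intro y
      rw [key, abs_neg]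
      have hco := g_cocycle φ hφcont hφadd f hf y (-T) T
      rw [show (-T) + T = (0:ℝ) by ring, intervalIntegral.integral_same] at hco
      have : (∫ s in (0:ℝ)..(-T), f (φ s y)) =
          -∫ u in (0:ℝ)..T, f (φ u (φ (-T) y)) := by linarith
      rw [this, abs_neg]
      exact hsep (φ (-T) y)
    have := master_pos ψ hψcont hψ0 hψadd f hf M hM ε T hε hT hsepψ x (-t)
      (by linarith)
    rw [key, abs_neg, neg_neg] at this
    rw [abs_of_neg ht]
    exact this

end Aux

/-- Assume `N` is a compact metric space. Then the map
`F : N × ℝ → N × N × ℝ`, `F(x, t) = (x, φ_t(x), t + ∫_0^t α(w(φ_s(x))) ds)`,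
is proper (preimages of compact sets are compact) if and only if there exist
`ε > 0` and `T > 0` such that `|1 + (1/T)·∫_0^T α(w(φ_s(x))) ds| > ε` for every `x ∈ N`. -/
theorem stmt2 {N : Type*} [MetricSpace N] [CompactSpace N]
    {k : ℕ} (hk : 1 ≤ k)
    (φ : ℝ → N → N) (hφcont : Continuous fun p : ℝ × N => φ p.1 p.2)
    (hφ0 : ∀ x, φ 0 x = x) (hφadd : ∀ t s x, φ (t + s) x = φ t (φ s x))
    (w : N → EuclideanSpace ℝ (Fin k)) (hw : Continuous w)
    (α : EuclideanSpace ℝ (Fin k) →ₗ[ℝ] ℝ) :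
    (∀ Q : Set (N × N × ℝ), IsCompact Q →
        IsCompact {p : N × ℝ |
          (p.1, φ p.2 p.1, p.2 + ∫ s in (0:ℝ)..p.2, α (w (φ s p.1))) ∈ Q}) ↔
    (∃ ε > (0:ℝ), ∃ T > (0:ℝ), ∀ x : N,
        ε < |1 + (1 / T) * ∫ s in (0:ℝ)..T, α (w (φ s x))|) := by
  have hα : Continuous α := α.continuous_of_finiteDimensional
  set f : N → ℝ := fun y => 1 + α (w y) with hfdef
  have hfcont : Continuous f := continuous_const.add (hα.comp hw)
  have horb : ∀ x : N, Continuous fun s : ℝ => φ s x :=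
    fun x => hφcont.comp (continuous_id.prodMk continuous_const)
  have key : ∀ (x : N) (t : ℝ),
      t + (∫ s in (0:ℝ)..t, α (w (φ s x))) = ∫ s in (0:ℝ)..t, f (φ s x) := by
    intro x t
    have h1 : (∫ s in (0:ℝ)..t, f (φ s x)) =
        (∫ s in (0:ℝ)..t, (1:ℝ)) + ∫ s in (0:ℝ)..t, α (w (φ s x)) :=
      intervalIntegral.integral_add intervalIntegrable_const
        (((hα.comp hw).comp (horb x)).intervalIntegrable _ _)
    rw [h1]
    simp
  constructor
  · -- proper → condition
    intro hproper
    by_contra hcon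
    push_neg at hcon
    have hQ : IsCompact ((Set.univ : Set N) ×ˢ (Set.univ : Set N) ×ˢ Set.Icc (-1:ℝ) 1) :=
      isCompact_univ.prod (isCompact_univ.prod isCompact_Icc)
    have hK := hproper _ hQ
    obtain ⟨C, hC⟩ := hK.exists_bound_of_continuousOn continuous_snd.continuousOn
    obtain ⟨n, hn⟩ := exists_nat_gt C
    have hTpos : (0:ℝ) < (n:ℝ) + 1 := by positivity
    have hεpos : (0:ℝ) < 1 / ((n:ℝ) + 1) := by positivity
    obtain ⟨x, hx⟩ := hcon (1 / ((n:ℝ) + 1)) hεpos ((n:ℝ) + 1) hTpos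
    -- |1 + (1/T)·∫| ≤ 1/(n+1), so |g x T| ≤ 1
    have hgT : |∫ s in (0:ℝ)..((n:ℝ)+1), f (φ s x)| ≤ 1 := by
      rw [← key]
      have heq : ((n:ℝ)+1) + (∫ s in (0:ℝ)..((n:ℝ)+1), α (w (φ s x))) =
          ((n:ℝ)+1) * (1 + (1/((n:ℝ)+1)) * ∫ s in (0:ℝ)..((n:ℝ)+1), α (w (φ s x))) := by
        field_simp
      rw [heq, abs_mul, abs_of_pos hTpos]
      calc ((n:ℝ)+1) * |1 + (1/((n:ℝ)+1)) * ∫ s in (0:ℝ)..((n:ℝ)+1), α (w (φ s x))|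
          ≤ ((n:ℝ)+1) * (1 / ((n:ℝ)+1)) := by
            apply mul_le_mul_of_nonneg_left hx hTpos.le
        _ = 1 := by field_simp
    have hmem : (x, ((n:ℝ)+1)) ∈ {p : N × ℝ |
        (p.1, φ p.2 p.1, p.2 + ∫ s in (0:ℝ)..p.2, α (w (φ s p.1))) ∈
          (Set.univ : Set N) ×ˢ (Set.univ : Set N) ×ˢ Set.Icc (-1:ℝ) 1} := by
      refine ⟨trivial, trivial, ?_⟩
      simp only [Set.mem_Icc]
      have := abs_le.mp (by rw [key]; exact hgT :
        |((n:ℝ)+1) + ∫ s in (0:ℝ)..((n:ℝ)+1), α (w (φ s x))| ≤ 1)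
      exact this
    have := hC _ hmem
    simp only [Real.norm_eq_abs] at this
    have : ((n:ℝ)+1) ≤ C := le_trans (le_abs_self _) this
    linarith
  · rintro ⟨ε, hε, T, hT, hsep⟩
    have hsep' : ∀ y : N, ε * T < |∫ s in (0:ℝ)..T, f (φ s y)| := by
      intro y
      have hy := hsep y
      have heq : (∫ s in (0:ℝ)..T, f (φ s y)) =
          T * (1 + (1/T) * ∫ s in (0:ℝ)..T, α (w (φ s y))) := by
        rw [← key]; field_simp
      rw [heq, abs_mul, abs_of_pos hT]
      calc ε * T = T * ε := by ring
        _ < T * |1 + (1/T) * ∫ s in (0:ℝ)..T, α (w (φ s y))| := by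
            exact (mul_lt_mul_iff_right₀ hT).mpr hy
    obtain ⟨M0, hM0⟩ := isCompact_univ.exists_bound_of_continuousOn hfcont.continuousOn
    set M : ℝ := max M0 0 with hMdef
    have hM : ∀ y : N, |f y| ≤ M := fun y =>
      le_trans (by simpa [Real.norm_eq_abs] using hM0 y trivial) (le_max_left _ _)
    intro Q hQ
    have hFcont : Continuous (fun p : N × ℝ =>
        (p.1, φ p.2 p.1, p.2 + ∫ s in (0:ℝ)..p.2, α (w (φ s p.1)))) := by
      refine continuous_fst.prodMk (Continuous.prodMk ?_ ?_)
      · exact hφcont.comp (continuous_snd.prodMk continuous_fst)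
      · exact continuous_snd.add
          (g_cont φ hφcont (fun y => α (w y)) (hα.comp hw))
    have hKclosed : IsClosed {p : N × ℝ |
        (p.1, φ p.2 p.1, p.2 + ∫ s in (0:ℝ)..p.2, α (w (φ s p.1))) ∈ Q} :=
      hQ.isClosed.preimage hFcont
    obtain ⟨C, hC⟩ := hQ.exists_bound_of_continuousOn
      (continuous_snd.comp continuous_snd).continuousOn
    set B : ℝ := (C + (ε + M) * T) / ε with hBdef
    apply IsCompact.of_isClosed_subset
      (isCompact_univ.prod (isCompact_Icc (a := -B) (b := B))) hKclosed
    intro p hp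
    have hm := master φ hφcont hφ0 hφadd f hfcont M hM ε T hε hT hsep' p.1 p.2
    have hgQ : ‖(p.1, φ p.2 p.1,
        p.2 + ∫ s in (0:ℝ)..p.2, α (w (φ s p.1))).2.2‖ ≤ C := hC _ hp
    simp only [Real.norm_eq_abs] at hgQ
    rw [key p.1 p.2] at hgQ
    have hpB : |p.2| ≤ B := by
      rw [hBdef, le_div_iff₀ hε]
      nlinarith
    exact ⟨trivial, abs_le.mp hpB⟩
end

section
/- Assume in addition that N is Hausdorff and that there exists ε > 0 such that α(w(x)) > −1 + ε for all x ∈ N. Then the ℝ^k-action (τ_h) on M = N × ℝ^k is free and proper. -/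
open MeasureTheory

/-!
The action moves the `ℝ^k`-coordinate of `(x, v)` by the displacement
`D = h + ∫_0^{α h} w(φ_s x) ds`, and `α D = ∫_0^{α h} (1 + α(w(φ_s x))) ds`, whose integrand is
at least `ε`. Hence `ε |α h| ≤ |α D| ≤ ‖α‖ ‖D‖`. A fixed point has `D = 0`, so `α h = 0`, the
integral vanishes and `h = 0`. If `(τ_h z, z)` ranges over a compact set, then `D` is bounded,
so the flow time `α h` is bounded, so the integral runs over a compact piece of the flow and is
bounded too. Thus `h = D - ∫ …` is bounded, and the preimage of the compact (hence closed, `N`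
being Hausdorff) set is a closed subset of a compact set.
-/

theorem mul_abs_le_abs_intervalIntegral {f : ℝ → ℝ} {ε : ℝ} (hf : Continuous f)
    (hfε : ∀ s, ε ≤ f s) (t : ℝ) : ε * |t| ≤ |∫ s in (0:ℝ)..t, f s| := by
  rcases le_total 0 t with ht | ht
  · calc ε * |t| = ∫ _ in (0:ℝ)..t, ε := by simp [abs_of_nonneg ht, mul_comm]
      _ ≤ ∫ s in (0:ℝ)..t, f s := intervalIntegral.integral_mono_on ht intervalIntegrable_const
            (hf.intervalIntegrable 0 t) fun s _ => hfε s
      _ ≤ _ := le_abs_self _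
  · calc ε * |t| = ∫ _ in t..(0:ℝ), ε := by simp [abs_of_nonpos ht, mul_comm]
      _ ≤ ∫ s in t..(0:ℝ), f s := intervalIntegral.integral_mono_on ht intervalIntegrable_const
            (hf.intervalIntegrable t 0) fun s _ => hfε s
      _ ≤ _ := by rw [intervalIntegral.integral_symm]; exact neg_le_abs _

section Displacement

variable {E : Type*} [NormedAddCommGroup E] [NormedSpace ℝ E] [CompleteSpace E]
  (α : E →L[ℝ] ℝ) {ε : ℝ}

theorem mul_abs_le_abs_apply_add_intervalIntegral {g : ℝ → E} (hg : Continuous g)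
    (hgε : ∀ s, -1 + ε ≤ α (g s)) (h : E) :
    ε * |α h| ≤ |α (h + ∫ s in (0:ℝ)..α h, g s)| := by
  have hα : α (h + ∫ s in (0:ℝ)..α h, g s) = ∫ s in (0:ℝ)..α h, (1 + α (g s)) := by
    rw [map_add, ← α.intervalIntegral_comp_comm (hg.intervalIntegrable _ _),
      intervalIntegral.integral_add (f := fun _ => 1) (g := fun s => α (g s))
        intervalIntegrable_const ((α.continuous.comp hg).intervalIntegrable _ _)]
    simp
  rw [hα]
  exact mul_abs_le_abs_intervalIntegral (by fun_prop) (fun s => by linarith [hgε s]) _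

theorem eq_zero_of_add_intervalIntegral_eq_zero {g : ℝ → E} (hg : Continuous g) (hε : 0 < ε)
    (hgε : ∀ s, -1 + ε ≤ α (g s)) {h : E} (h0 : h + ∫ s in (0:ℝ)..α h, g s = 0) : h = 0 := by
  have hαh : α h = 0 := by
    have := mul_abs_le_abs_apply_add_intervalIntegral α hg hgε h
    rw [h0, map_zero, abs_zero] at this
    exact abs_nonpos_iff.mp (nonpos_of_mul_nonpos_right this hε)
  simpa [hαh] using h0

theorem exists_norm_le_of_norm_add_intervalIntegral_le {N : Type*} [TopologicalSpace N]
    {φ : ℝ → N → N} (hφ : Continuous fun p : ℝ × N => φ p.1 p.2) {w : N → E} (hw : Continuous w)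
    (hε : 0 < ε) (hwε : ∀ x, -1 + ε ≤ α (w x)) {K : Set N} (hK : IsCompact K) (C : ℝ) :
    ∃ R, ∀ h, ∀ x ∈ K, ‖h + ∫ s in (0:ℝ)..α h, w (φ s x)‖ ≤ C → ‖h‖ ≤ R := by
  set T := ‖α‖ * C / ε
  obtain ⟨B, hB⟩ := ((isCompact_Icc (a := -T) (b := T)).prod hK |>.image hφ)
    |>.exists_bound_of_continuousOn hw.continuousOn
  replace hB := fun y hy => (hB y hy).trans (le_abs_self B)
  refine ⟨C + |B| * T, fun h x hx hC => ?_⟩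
  set I := ∫ s in (0:ℝ)..α h, w (φ s x)
  have hαh : |α h| ≤ T := by
    rw [le_div_iff₀ hε, mul_comm]
    calc ε * |α h| ≤ |α (h + I)| :=
          mul_abs_le_abs_apply_add_intervalIntegral α (by fun_prop) (fun s => hwε _) h
      _ ≤ ‖α‖ * ‖h + I‖ := α.le_opNorm _
      _ ≤ ‖α‖ * C := by gcongr
  have hI : ‖I‖ ≤ |B| * T := by
    have hs : ∀ s ∈ Set.uIoc 0 (α h), s ∈ Set.Icc (-T) T := fun s hs => by
      obtain ⟨hT₁, hT₂⟩ := abs_le.mp hαh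
      rcases Set.mem_uIoc.mp hs with ⟨_, _⟩ | ⟨_, _⟩ <;> constructor <;> linarith
    calc ‖I‖ ≤ |B| * |α h - 0| := intervalIntegral.norm_integral_le_of_norm_le_const
          fun s h's => hB _ ⟨(s, x), ⟨hs s h's, hx⟩, rfl⟩
      _ ≤ |B| * T := by rw [sub_zero]; gcongr
  calc ‖h‖ = ‖(h + I) - I‖ := by rw [add_sub_cancel_right]
    _ ≤ ‖h + I‖ + ‖I‖ := norm_sub_le _ _
    _ ≤ C + |B| * T := add_le_add hC hI

end Displacement

section Action

variable {N : Type*} {k : ℕ} {φ : ℝ → N → N}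
  {w : N → EuclideanSpace ℝ (Fin k)} (α : EuclideanSpace ℝ (Fin k) →ₗ[ℝ] ℝ)

theorem tauAct_snd_sub (h : EuclideanSpace ℝ (Fin k)) (z : N × EuclideanSpace ℝ (Fin k)) :
    (tauAct φ w α h z).2 - z.2 = h + ∫ s in (0:ℝ)..α h, w (φ s z.1) := by
  simp [tauAct, add_assoc]

theorem continuous_tauAct [TopologicalSpace N] (hφ : Continuous fun p : ℝ × N => φ p.1 p.2)
    (hw : Continuous w) :
    Continuous fun p : EuclideanSpace ℝ (Fin k) × (N × EuclideanSpace ℝ (Fin k)) =>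
      tauAct φ w α p.1 p.2 := by
  have hα : Continuous α := α.continuous_of_finiteDimensional
  have hint := intervalIntegral.continuous_parametric_intervalIntegral_of_continuous
    (f := fun (p : EuclideanSpace ℝ (Fin k) × (N × EuclideanSpace ℝ (Fin k))) s => w (φ s p.2.1))
    (a₀ := 0) (μ := volume) (by fun_prop) (hα.comp continuous_fst)
  unfold tauAct
  fun_prop

end Action

theorem stmt3_general {N : Type*} [TopologicalSpace N] [T2Space N] {k : ℕ}
    (φ : ℝ → N → N) (hφcont : Continuous fun p : ℝ × N => φ p.1 p.2)
    (w : N → EuclideanSpace ℝ (Fin k)) (hw : Continuous w)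
    (α : EuclideanSpace ℝ (Fin k) →ₗ[ℝ] ℝ)
    (hε : ∃ ε > (0:ℝ), ∀ x : N, -1 + ε < α (w x)) :
    (∀ (h : EuclideanSpace ℝ (Fin k)) (z : N × EuclideanSpace ℝ (Fin k)),
        tauAct φ w α h z = z → h = 0) ∧
    (∀ Q : Set ((N × EuclideanSpace ℝ (Fin k)) × (N × EuclideanSpace ℝ (Fin k))),
        IsCompact Q →
        IsCompact {p : EuclideanSpace ℝ (Fin k) × (N × EuclideanSpace ℝ (Fin k)) |
          (tauAct φ w α p.1 p.2, p.2) ∈ Q}) := by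
  obtain ⟨ε, hε0, hwε⟩ := hε
  let A := LinearMap.toContinuousLinearMap α
  have hwA : ∀ x, -1 + ε ≤ A (w x) := fun x => (hwε x).le
  refine ⟨fun h z hz => ?_, fun Q hQ => ?_⟩
  · have hD : h + ∫ s in (0:ℝ)..α h, w (φ s z.1) = 0 := by
      rw [← tauAct_snd_sub, hz, sub_self]
    exact eq_zero_of_add_intervalIntegral_eq_zero A (by fun_prop) hε0 (fun s => hwA _) hD
  · obtain ⟨C, hC⟩ := hQ.exists_bound_of_continuousOn
      (f := fun m : (N × EuclideanSpace ℝ (Fin k)) × _ => m.1.2 - m.2.2) (by fun_prop)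
    obtain ⟨R, hR⟩ := exists_norm_le_of_norm_add_intervalIntegral_le A hφcont hw hε0 hwA
      (hQ.image (f := fun m : (N × EuclideanSpace ℝ (Fin k)) × _ => m.2.1) (by fun_prop)) C
    refine ((isCompact_closedBall 0 R).prod (hQ.image continuous_snd)).of_isClosed_subset
      (hQ.isClosed.preimage ((continuous_tauAct α hφcont hw).prodMk continuous_snd)) ?_
    rintro ⟨h, z⟩ hp
    refine ⟨mem_closedBall_zero_iff.2 (hR h z.1 ⟨_, hp, rfl⟩ ?_), _, hp, rfl⟩
    have hD := hC _ hp
    rw [tauAct_snd_sub] at hD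
    exact hD

/-- Assume `N` is Hausdorff and there exists `ε > 0` with `α(w(x)) > −1 + ε` for all `x`.
Then the `ℝ^k`-action `(τ_h)` on `M = N × ℝ^k` is free and proper. -/
theorem stmt3 {N : Type*} [TopologicalSpace N] [T2Space N] {k : ℕ} (hk : 1 ≤ k)
    (φ : ℝ → N → N) (hφcont : Continuous fun p : ℝ × N => φ p.1 p.2)
    (hφ0 : ∀ x, φ 0 x = x) (hφadd : ∀ t s x, φ (t + s) x = φ t (φ s x))
    (w : N → EuclideanSpace ℝ (Fin k)) (hw : Continuous w)
    (α : EuclideanSpace ℝ (Fin k) →ₗ[ℝ] ℝ)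
    (hε : ∃ ε > (0:ℝ), ∀ x : N, -1 + ε < α (w x)) :
    (∀ (h : EuclideanSpace ℝ (Fin k)) (z : N × EuclideanSpace ℝ (Fin k)),
        tauAct φ w α h z = z → h = 0) ∧
    (∀ Q : Set ((N × EuclideanSpace ℝ (Fin k)) × (N × EuclideanSpace ℝ (Fin k))),
        IsCompact Q →
        IsCompact {p : EuclideanSpace ℝ (Fin k) × (N × EuclideanSpace ℝ (Fin k)) |
          (tauAct φ w α p.1 p.2, p.2) ∈ Q}) :=
  stmt3_general φ hφcont w hw α hε
end

section
/- Assume there exists ε > 0 such that α(w(x)) > −1 + ε for all x ∈ N. Then for every x ∈ N the map κ_x : ℝ^k → ℝ^k, κ_x(h) := h + ∫_0^{α(h)} w(φ_s(x)) ds, is a bijection, and the map Ψ : N × ℝ^k → M = N × ℝ^k, Ψ(x, h) := τ_h(x, 0) = (φ_{α(h)}(x), κ_x(h)), is a bijection (i.e. the zero section N × {0} is a global section for the ℝ^k-action). -/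
open MeasureTheory

/-- Assume there exists `ε > 0` with `α(w(x)) > −1 + ε` for all `x ∈ N`. Then for every
`x ∈ N` the map `κ_x : ℝ^k → ℝ^k`, `κ_x(h) = h + ∫_0^{α(h)} w(φ_s(x)) ds`, is a bijection,
and the map `Ψ : N × ℝ^k → M`, `Ψ(x, h) = τ_h(x, 0) = (φ_{α(h)}(x), κ_x(h))`, is a
bijection (the zero section is a global section for the `ℝ^k`-action). -/
theorem stmt4 {N : Type*} [TopologicalSpace N] {k : ℕ} (hk : 1 ≤ k)
    (φ : ℝ → N → N) (hφcont : Continuous fun p : ℝ × N => φ p.1 p.2)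
    (hφ0 : ∀ x, φ 0 x = x) (hφadd : ∀ t s x, φ (t + s) x = φ t (φ s x))
    (w : N → EuclideanSpace ℝ (Fin k)) (hw : Continuous w)
    (α : EuclideanSpace ℝ (Fin k) →ₗ[ℝ] ℝ)
    (hε : ∃ ε > (0:ℝ), ∀ x : N, -1 + ε < α (w x)) :
    (∀ x : N, Function.Bijective
        (fun h : EuclideanSpace ℝ (Fin k) => h + ∫ s in (0:ℝ)..(α h), w (φ s x))) ∧
    Function.Bijective
        (fun p : N × EuclideanSpace ℝ (Fin k) => tauAct φ w α p.2 (p.1, 0)) := by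
  classical
  obtain ⟨ε, hε0, hεlt⟩ := hε
  have hφx : ∀ x : N, Continuous fun s : ℝ => φ s x := fun x =>
    hφcont.comp (continuous_id.prodMk continuous_const)
  have hwc : ∀ x : N, Continuous fun s : ℝ => w (φ s x) := fun x => hw.comp (hφx x)
  set αc : EuclideanSpace ℝ (Fin k) →L[ℝ] ℝ := LinearMap.toContinuousLinearMap α with hαcdef
  set g : N → ℝ → ℝ := fun x s => α (w (φ s x)) with hgdef
  have hgc : ∀ x, Continuous (g x) := fun x => αc.continuous.comp (hwc x)
  have hαint : ∀ (x : N) (a b : ℝ),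
      α (∫ s in a..b, w (φ s x)) = ∫ s in a..b, g x s := by
    intro x a b
    exact (αc.intervalIntegral_comp_comm ((hwc x).intervalIntegrable a b)).symm
  set F : N → ℝ → ℝ := fun x t => t + ∫ s in (0:ℝ)..t, g x s with hFdef
  have hFd : ∀ x t, HasDerivAt (F x) (1 + g x t) t := fun x t =>
    (hasDerivAt_id t).add ((hgc x).integral_hasStrictDerivAt 0 t).hasDerivAt
  have hεle : ∀ x t, ε ≤ 1 + g x t := fun x t => by
    have := hεlt (φ t x); simp only [hgdef]; linarith
  have hFmono : ∀ x, StrictMono (F x) := fun x =>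
    strictMono_of_hasDerivAt_pos (hFd x) (fun t => lt_of_lt_of_le hε0 (hεle x t))
  have hF0 : ∀ x, F x 0 = 0 := fun x => by simp [hFdef]
  have hFint : ∀ x t, F x t = ∫ s in (0:ℝ)..t, (1 + g x s) := fun x t => by
    rw [intervalIntegral.integral_add (intervalIntegrable_const)
      ((hgc x).intervalIntegrable 0 t)]
    simp [hFdef]
  have hub : ∀ x t, 0 ≤ t → ε * t ≤ F x t := by
    intro x t ht
    rw [hFint]
    calc ε * t = ∫ _ in (0:ℝ)..t, ε := by simp [mul_comm]
      _ ≤ _ := intervalIntegral.integral_mono_on ht intervalIntegrable_const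
          ((continuous_const.add (hgc x)).intervalIntegrable 0 t) (fun s _ => hεle x s)
  have hlb : ∀ x t, t ≤ 0 → F x t ≤ ε * t := by
    intro x t ht
    have h1 : (∫ _ in t..(0:ℝ), ε) ≤ ∫ s in t..(0:ℝ), (1 + g x s) :=
      intervalIntegral.integral_mono_on ht intervalIntegrable_const
        ((continuous_const.add (hgc x)).intervalIntegrable t 0) (fun s _ => hεle x s)
    have h2 : (∫ s in t..(0:ℝ), (1 + g x s)) = - F x t := by
      rw [hFint, intervalIntegral.integral_symm]
    have h3 : (∫ _ in t..(0:ℝ), ε) = -(ε * t) := by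
      simp [mul_comm]
    rw [h2, h3] at h1
    linarith
  have hFcont : ∀ x, Continuous (F x) := fun x =>
    Differentiable.continuous (fun t => (hFd x t).differentiableAt)
  have hFbij : ∀ x, Function.Bijective (F x) := by
    intro x
    refine ⟨(hFmono x).injective, (hFcont x).surjective ?_ ?_⟩
    · refine Filter.tendsto_atTop_mono' _ ?_ ((Filter.tendsto_const_mul_atTop_of_pos hε0).2 Filter.tendsto_id)
      filter_upwards [Filter.eventually_ge_atTop (0:ℝ)] with t ht
      exact hub x t ht
    · refine Filter.tendsto_atBot_mono' _ ?_ ((Filter.tendsto_const_mul_atBot_of_pos hε0).2 Filter.tendsto_id)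
      filter_upwards [Filter.eventually_le_atBot (0:ℝ)] with t ht
      exact hlb x t ht
  have hshift : ∀ (x : N) (a b c : ℝ),
      (∫ s in b..c, w (φ s (φ a x))) = ∫ s in (b+a)..(c+a), w (φ s x) := by
    intro x a b c
    have e : ∀ s : ℝ, w (φ s (φ a x)) = w (φ (s + a) x) := fun s => by rw [hφadd]
    simp_rw [e]
    exact intervalIntegral.integral_comp_add_right (fun s => w (φ s x)) a
  have hκbij : ∀ x : N, Function.Bijective
      (fun h : EuclideanSpace ℝ (Fin k) => h + ∫ s in (0:ℝ)..(α h), w (φ s x)) := by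
    intro x
    constructor
    · intro h h' heq
      replace heq : h + (∫ s in (0:ℝ)..(α h), w (φ s x))
          = h' + ∫ s in (0:ℝ)..(α h'), w (φ s x) := heq
      have h1 : F x (α h) = F x (α h') := by
        have := congrArg α heq
        rw [map_add, map_add, hαint, hαint] at this
        exact this
      have h2 : α h = α h' := (hFmono x).injective h1
      rw [h2] at heq
      exact add_right_cancel heq
    · intro v
      obtain ⟨t, ht⟩ := (hFbij x).2 (α v)
      refine ⟨v - ∫ s in (0:ℝ)..t, w (φ s x), ?_⟩
      have ht' : t + ∫ s in (0:ℝ)..t, g x s = α v := ht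
      have hα : α (v - ∫ s in (0:ℝ)..t, w (φ s x)) = t := by
        rw [map_sub, hαint]
        linarith
      show (v - ∫ s in (0:ℝ)..t, w (φ s x))
          + (∫ s in (0:ℝ)..(α (v - ∫ s in (0:ℝ)..t, w (φ s x))), w (φ s x)) = v
      rw [hα]
      abel
  refine ⟨hκbij, ?_, ?_⟩
  · rintro ⟨x, h⟩ ⟨x', h'⟩ heq
    simp only [tauAct, zero_add, Prod.mk.injEq] at heq
    obtain ⟨h1, h2⟩ := heq
    set d := α h - α h' with hd
    have hx' : x' = φ d x := by
      have e1 : φ (-(α h') + α h) x = x' := by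
        rw [hφadd, h1, ← hφadd, neg_add_cancel, hφ0]
      rw [← e1]
      congr 1
      rw [hd]; ring
    have e2 : α h' + d = α h := by rw [hd]; ring
    have h2' : h + (∫ s in (0:ℝ)..(α h), w (φ s x))
        = h' + ∫ s in d..(α h), w (φ s x) := by
      rw [h2, hx', hshift x d 0 (α h'), zero_add, e2]
    have hadj : (∫ s in (0:ℝ)..d, w (φ s x)) + (∫ s in d..(α h), w (φ s x))
        = ∫ s in (0:ℝ)..(α h), w (φ s x) :=
      intervalIntegral.integral_add_adjacent_intervals
        ((hwc x).intervalIntegrable 0 d) ((hwc x).intervalIntegrable d (α h))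
    have h3 : h + (∫ s in (0:ℝ)..d, w (φ s x)) = h' := by
      have h4 : h + ((∫ s in (0:ℝ)..d, w (φ s x)) + ∫ s in d..(α h), w (φ s x))
          = h' + ∫ s in d..(α h), w (φ s x) := by rw [hadj]; exact h2'
      rw [← add_assoc] at h4
      exact add_right_cancel h4
    have h5 : F x d = 0 := by
      have h6 := congrArg α h3
      rw [map_add, hαint] at h6
      show d + ∫ s in (0:ℝ)..d, g x s = 0
      rw [hd]; rw [hd] at h6; linarith
    have hd0 : d = 0 := (hFmono x).injective (by rw [h5, hF0 x])
    have hh : h = h' := by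
      rw [← h3, hd0, intervalIntegral.integral_same, add_zero]
    have hxx : x = x' := by rw [hx', hd0, hφ0]
    exact Prod.ext hxx hh
  · rintro ⟨y, v⟩
    obtain ⟨t, ht⟩ := (hFbij y).2 (-(α v))
    have ht' : t + ∫ s in (0:ℝ)..t, g y s = -(α v) := ht
    set a : ℝ := -t with ha
    set h : EuclideanSpace ℝ (Fin k) := v - ∫ s in (-a)..(0:ℝ), w (φ s y) with hhdef
    have hαh : α h = a := by
      rw [hhdef, map_sub, hαint]
      have e : (∫ s in (-a)..(0:ℝ), g y s) = - ∫ s in (0:ℝ)..(-a), g y s :=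
        intervalIntegral.integral_symm 0 (-a)
      rw [e, ha, neg_neg]
      linarith
    refine ⟨(φ (-a) y, h), ?_⟩
    simp only [tauAct, zero_add, Prod.mk.injEq]
    constructor
    · rw [hαh, ← hφadd, add_neg_cancel, hφ0]
    · rw [hαh, hshift y (-a) 0 a, zero_add, add_neg_cancel, hhdef]
      abel
end

section
/- For every open set W containing K there exist open sets V₀ and V′ with compact closures such that K ⊆ V₀, the closure of V₀ is contained in V′, the closure of V′ is contained in W, and for every x ∈ V₀ and every T ≥ 0: if φ_T(x) ∈ V₀ then φ_t(x) ∈ V′ for all t ∈ [0, T], and if φ_{−T}(x) ∈ V₀ then φ_t(x) ∈ V′ for all t ∈ [−T, 0]. -/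
open Set Metric

/-- Auxiliary lemma: if `y ∉ Γ` with `Γ` closed and invariant, `K ⊆ Γ` compact, and the
backward flow from compact sets in `Γᶜ` into the compact set `Q ⊇ thickening ε₀ K` is
proper, then some neighborhood of `y` has backward orbit avoiding a small thickening
of `K`. -/
lemma stmt5_half {N : Type*} [MetricSpace N] [LocallyCompactSpace N]
    (φ : ℝ → N → N) (hφcont : Continuous fun p : ℝ × N => φ p.1 p.2)
    (hφ0 : ∀ x, φ 0 x = x) (hφadd : ∀ t s x, φ (t + s) x = φ t (φ s x))
    (Γ : Set N) (hΓc : IsClosed Γ) (hΓinv : ∀ t : ℝ, φ t '' Γ = Γ)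
    (K : Set N) (hKc : IsCompact K) (hKΓ : K ⊆ Γ)
    (Q : Set N)
    (ε₀ : ℝ) (hε₀ : 0 < ε₀) (hthick : Metric.thickening ε₀ K ⊆ Q)
    (hpast : ∀ C : Set N, IsCompact C → C ⊆ Γᶜ →
        IsCompact {p : N × ℝ | p.1 ∈ C ∧ p.2 ≤ 0 ∧ φ p.2 p.1 ∈ Q})
    (y : N) (hy : y ∉ Γ) :
    ∃ (ε : ℝ) (C : Set N), 0 < ε ∧ C ∈ nhds y ∧
      ∀ p ∈ C, ∀ t : ℝ, t ≤ 0 → φ t p ∉ Metric.thickening ε K := by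
  obtain ⟨C₀, hC₀c, hyC₀, hC₀Γ⟩ := exists_compact_subset hΓc.isOpen_compl hy
  have hS := hpast C₀ hC₀c hC₀Γ
  obtain ⟨m, hm⟩ : BddBelow (Prod.snd '' {p : N × ℝ | p.1 ∈ C₀ ∧ p.2 ≤ 0 ∧ φ p.2 p.1 ∈ Q}) :=
    (hS.image continuous_snd).bddBelow
  set M : ℝ := max 0 (-m) with hM
  have hM0 : 0 ≤ M := le_max_left _ _
  set B : Set N := (fun t => φ t y) '' Set.Icc (-M) 0 with hB
  have horb : Continuous fun t => φ t y :=
    hφcont.comp (continuous_id.prodMk continuous_const)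
  have hBc : IsCompact B := isCompact_Icc.image horb
  have hBK : Disjoint B K := by
    rw [Set.disjoint_left]
    rintro b ⟨t, ht, rfl⟩ hbK
    apply hy
    have h1 : φ (-t) (φ t y) ∈ Γ := by
      rw [← hΓinv (-t)]; exact ⟨φ t y, hKΓ hbK, rfl⟩
    rwa [← hφadd, neg_add_cancel, hφ0] at h1
  obtain ⟨δ, hδ0, hδ⟩ := hBK.exists_thickenings hBc hKc.isClosed
  have hopen : IsOpen ((fun q : ℝ × N => φ q.1 q.2) ⁻¹' Metric.thickening δ B) :=
    Metric.isOpen_thickening.preimage hφcont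
  have hsub : Set.Icc (-M) 0 ×ˢ ({y} : Set N) ⊆
      (fun q : ℝ × N => φ q.1 q.2) ⁻¹' Metric.thickening δ B := by
    rintro ⟨t, p⟩ ⟨ht, hp⟩
    rw [Set.mem_singleton_iff] at hp
    subst hp
    exact Metric.self_subset_thickening hδ0 B ⟨t, ht, rfl⟩
  obtain ⟨u, v, hu, hv, huIcc, hyv, huv⟩ :=
    generalized_tube_lemma isCompact_Icc isCompact_singleton hopen hsub
  refine ⟨min ε₀ δ, v ∩ interior C₀, lt_min hε₀ hδ0,
    Filter.inter_mem (hv.mem_nhds (hyv rfl)) (isOpen_interior.mem_nhds hyC₀), ?_⟩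
  rintro p ⟨hpv, hpC⟩ t ht htK
  have hpC₀ : p ∈ C₀ := interior_subset hpC
  by_cases hMt : -M ≤ t
  · have hmem2 : ((t, p) : ℝ × N) ∈ u ×ˢ v := ⟨huIcc ⟨hMt, ht⟩, hpv⟩
    have h1 : φ t p ∈ Metric.thickening δ B := huv hmem2
    have h2 : φ t p ∈ Metric.thickening δ K :=
      Metric.thickening_mono (min_le_right _ _) K htK
    exact (Set.disjoint_left.1 hδ) h1 h2
  · push_neg at hMt
    have hQ' : φ t p ∈ Q := hthick (Metric.thickening_mono (min_le_left _ _) K htK)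
    have hmem : (p, t) ∈ {p : N × ℝ | p.1 ∈ C₀ ∧ p.2 ≤ 0 ∧ φ p.2 p.1 ∈ Q} := ⟨hpC₀, ht, hQ'⟩
    have hmt : m ≤ t := hm ⟨(p, t), hmem, rfl⟩
    have : -M ≤ m := by
      have := le_max_right 0 (-m)
      linarith
    linarith

/-- Let `φ` be a continuous flow on a locally compact σ-compact metric space `N`, with
closed invariant sets `Γ₊, Γ₋` whose intersection `K = Γ₊ ∩ Γ₋` (the trapped set) is
compact, and assume uniform properness in the future on the complement of `Γ₋` and in the
past on the complement of `Γ₊`.  Then for every open `W ⊇ K` there exist open sets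
`V₀, V′` with compact closures such that `K ⊆ V₀`, `closure V₀ ⊆ V′`, `closure V′ ⊆ W`,
and for every `x ∈ V₀` and `T ≥ 0`: if `φ_T(x) ∈ V₀` then `φ_t(x) ∈ V′` for all
`t ∈ [0, T]`, and if `φ_{−T}(x) ∈ V₀` then `φ_t(x) ∈ V′` for all `t ∈ [−T, 0]`. -/
theorem stmt5 {N : Type*} [MetricSpace N] [LocallyCompactSpace N] [SigmaCompactSpace N]
    (φ : ℝ → N → N) (hφcont : Continuous fun p : ℝ × N => φ p.1 p.2)
    (hφ0 : ∀ x, φ 0 x = x) (hφadd : ∀ t s x, φ (t + s) x = φ t (φ s x))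
    (Γp Γm : Set N) (hΓpc : IsClosed Γp) (hΓmc : IsClosed Γm)
    (hΓpinv : ∀ t : ℝ, φ t '' Γp = Γp) (hΓminv : ∀ t : ℝ, φ t '' Γm = Γm)
    (hfut : ∀ C : Set N, IsCompact C → C ⊆ Γmᶜ →
        ∀ Q : Set N, IsCompact Q →
          IsCompact {p : N × ℝ | p.1 ∈ C ∧ 0 ≤ p.2 ∧ φ p.2 p.1 ∈ Q})
    (hpast : ∀ C : Set N, IsCompact C → C ⊆ Γpᶜ →
        ∀ Q : Set N, IsCompact Q →
          IsCompact {p : N × ℝ | p.1 ∈ C ∧ p.2 ≤ 0 ∧ φ p.2 p.1 ∈ Q})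
    (hK : IsCompact (Γp ∩ Γm)) :
    ∀ W : Set N, IsOpen W → Γp ∩ Γm ⊆ W →
      ∃ V₀ V' : Set N, IsOpen V₀ ∧ IsOpen V' ∧
        IsCompact (closure V₀) ∧ IsCompact (closure V') ∧
        Γp ∩ Γm ⊆ V₀ ∧ closure V₀ ⊆ V' ∧ closure V' ⊆ W ∧
        ∀ x ∈ V₀, ∀ T : ℝ, 0 ≤ T →
          (φ T x ∈ V₀ → ∀ t ∈ Set.Icc (0:ℝ) T, φ t x ∈ V') ∧
          (φ (-T) x ∈ V₀ → ∀ t ∈ Set.Icc (-T) (0:ℝ), φ t x ∈ V') := by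
  intro W hW hKW
  set K : Set N := Γp ∩ Γm with hKdef
  -- two nested open sets with compact closures between K and W
  obtain ⟨L₁, hL₁c, hKL₁, hL₁W⟩ := exists_compact_between hK hW hKW
  set U₁ : Set N := interior L₁ with hU₁
  have hU₁o : IsOpen U₁ := isOpen_interior
  have hclU₁ : closure U₁ ⊆ L₁ := closure_minimal interior_subset hL₁c.isClosed
  have hclU₁c : IsCompact (closure U₁) := hL₁c.of_isClosed_subset isClosed_closure hclU₁
  obtain ⟨L₂, hL₂c, hKL₂, hL₂U₁⟩ := exists_compact_between hK hU₁o hKL₁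
  set U₂ : Set N := interior L₂ with hU₂
  have hU₂o : IsOpen U₂ := isOpen_interior
  have hclU₂ : closure U₂ ⊆ U₁ := (closure_minimal interior_subset hL₂c.isClosed).trans hL₂U₁
  have hU₂U₁ : U₂ ⊆ U₁ := subset_closure.trans hclU₂
  obtain ⟨ε₀, hε₀, hthick₀⟩ := hK.exists_thickening_subset_open hU₂o hKL₂
  set Q : Set N := closure U₁ with hQdef
  have hthickQ : Metric.thickening ε₀ K ⊆ Q :=
    hthick₀.trans (hU₂U₁.trans subset_closure)
  set A : Set N := closure U₁ \ U₁ with hA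
  have hAc : IsCompact A := hclU₁c.diff hU₁o
  have horb : ∀ x : N, Continuous fun t => φ t x := fun x =>
    hφcont.comp (continuous_id.prodMk continuous_const)
  -- key pointwise claim on the boundary annulus A
  have key : ∀ y : N, ∃ (ε : ℝ) (C : Set N), 0 < ε ∧ (y ∈ A →
      C ∈ nhds y ∧
        ((∀ p ∈ C, ∀ t : ℝ, t ≤ 0 → φ t p ∉ Metric.thickening ε K) ∨
         (∀ p ∈ C, ∀ t : ℝ, 0 ≤ t → φ t p ∉ Metric.thickening ε K))) := by
    intro y
    by_cases hyA : y ∈ A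
    · have hyK : y ∉ K := fun h => hyA.2 (hU₂U₁ (hKL₂ h))
      by_cases hyp : y ∈ Γp
      · -- then y ∉ Γm : use future properness with the reversed flow
        have hym : y ∉ Γm := fun h => hyK ⟨hyp, h⟩
        have hψpast : ∀ C : Set N, IsCompact C → C ⊆ Γmᶜ →
            IsCompact {p : N × ℝ | p.1 ∈ C ∧ p.2 ≤ 0 ∧ φ (-p.2) p.1 ∈ Q} := by
          intro C hC hCs
          have h1 := hfut C hC hCs Q hclU₁c
          have h2 := h1.image (Continuous.prodMk continuous_fst continuous_snd.neg)
          have heq : {p : N × ℝ | p.1 ∈ C ∧ p.2 ≤ 0 ∧ φ (-p.2) p.1 ∈ Q} =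
              (fun q : N × ℝ => (q.1, -q.2)) '' {p : N × ℝ | p.1 ∈ C ∧ 0 ≤ p.2 ∧ φ p.2 p.1 ∈ Q} := by
            ext ⟨x, t⟩
            constructor
            · rintro ⟨h1', h2', h3'⟩
              exact ⟨(x, -t), ⟨h1', show (0:ℝ) ≤ -t by linarith, h3'⟩, by simp⟩
            · rintro ⟨⟨a, b⟩, ⟨h1', h2', h3'⟩, heq'⟩
              obtain ⟨rfl, rfl⟩ : a = x ∧ -b = t := by simpa [Prod.ext_iff] using heq'
              exact ⟨h1', show (-b:ℝ) ≤ 0 by linarith, by simpa using h3'⟩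
          rw [heq]
          exact h2
        obtain ⟨ε, C, hε, hC, hcl⟩ := stmt5_half (fun t x => φ (-t) x)
          (hφcont.comp (continuous_fst.neg.prodMk continuous_snd))
          (fun x => by simpa using hφ0 x)
          (fun t s x => show φ (-(t + s)) x = φ (-t) (φ (-s) x) by rw [neg_add, hφadd])
          Γm hΓmc (fun t => hΓminv (-t)) K hK Set.inter_subset_right
          Q ε₀ hε₀ hthickQ hψpast y hym
        refine ⟨ε, C, hε, fun _ => ⟨hC, Or.inr ?_⟩⟩
        intro p hp t ht
        have := hcl p hp (-t) (by linarith)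
        simpa using this
      · -- y ∉ Γp : use past properness directly
        obtain ⟨ε, C, hε, hC, hcl⟩ := stmt5_half φ hφcont hφ0 hφadd
          Γp hΓpc hΓpinv K hK Set.inter_subset_left Q ε₀ hε₀ hthickQ
          (fun C hC hCs => hpast C hC hCs Q hclU₁c) y hyp
        exact ⟨ε, C, hε, fun _ => ⟨hC, Or.inl hcl⟩⟩
    · exact ⟨1, ∅, one_pos, fun h => absurd h hyA⟩
  choose! ε' C' hε' hkey using key
  obtain ⟨tfin, htfinA, hcover⟩ :=
    hAc.elim_nhds_subcover C' (fun y hy => (hkey y hy).1)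
  set ε : ℝ := if h : tfin.Nonempty then min ε₀ (tfin.inf' h ε') else ε₀ with hεdef
  have hε : 0 < ε := by
    rw [hεdef]
    split_ifs with h
    · exact lt_min hε₀ ((Finset.lt_inf'_iff h).2 fun b _ => hε' b)
    · exact hε₀
  have hεy : ∀ y ∈ tfin, ε ≤ ε' y := by
    intro y hy
    rw [hεdef]
    split_ifs with h
    · exact (min_le_right _ _).trans (Finset.inf'_le _ hy)
    · exact absurd ⟨y, hy⟩ h
  have hεε₀ : ε ≤ ε₀ := by
    rw [hεdef]; split_ifs with h; exacts [min_le_left _ _, le_rfl]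
  set V₀ : Set N := Metric.thickening ε K ∩ U₂ with hV₀def
  have hV₀U₁ : V₀ ⊆ U₁ := Set.inter_subset_right.trans hU₂U₁
  have hV₀thick : ∀ y ∈ tfin, V₀ ⊆ Metric.thickening (ε' y) K := fun y hy =>
    Set.inter_subset_left.trans (Metric.thickening_mono (hεy y hy) K)
  -- the key exclusion: no point of A can flow (in either time direction within a
  -- round trip) to V₀ on both sides
  have exclusion : ∀ z : N, z ∈ A → ∀ a b : ℝ, a ≤ 0 → 0 ≤ b →
      φ a z ∈ V₀ → φ b z ∈ V₀ → False := by
    intro z hz a b ha hb hza hzb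
    obtain ⟨i, hi, hzi⟩ : ∃ i ∈ tfin, z ∈ C' i := by
      simpa using hcover hz
    rcases (hkey i (htfinA i hi)).2 with hleft | hright
    · exact hleft z hzi a ha (hV₀thick i hi hza)
    · exact hright z hzi b hb (hV₀thick i hi hzb)
  refine ⟨V₀, U₁, Metric.isOpen_thickening.inter hU₂o, hU₁o, ?_, hclU₁c,
    fun k hk => ⟨Metric.self_subset_thickening hε K hk, hKL₂ hk⟩,
    (closure_mono Set.inter_subset_right).trans hclU₂,
    hclU₁.trans hL₁W, ?_⟩
  · exact hclU₁c.of_isClosed_subset isClosed_closure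
      (((closure_mono Set.inter_subset_right).trans hclU₂).trans subset_closure)
  intro x hx T hT
  constructor
  · -- forward statement
    intro hxT t ht
    by_contra hnot
    set S : Set ℝ := Set.Icc 0 t ∩ (fun s => φ s x) ⁻¹' U₁ᶜ with hSdef
    have hScl : IsClosed S := isClosed_Icc.inter (hU₁o.isClosed_compl.preimage (horb x))
    have htS : t ∈ S := ⟨⟨ht.1, le_rfl⟩, hnot⟩
    have hbdd : BddBelow S := ⟨0, fun s hs => hs.1.1⟩
    set s₀ : ℝ := sInf S with hs₀def
    have hs₀S : s₀ ∈ S := hScl.csInf_mem ⟨t, htS⟩ hbdd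
    have hnU : φ s₀ x ∉ U₁ := hs₀S.2
    have hs₀pos : 0 < s₀ := by
      rcases hs₀S.1.1.lt_or_eq with h | h
      · exact h
      · exact absurd (show φ s₀ x ∈ U₁ by rw [← h, hφ0]; exact hV₀U₁ hx) hnU
    have hbefore : ∀ s ∈ Set.Ico 0 s₀, φ s x ∈ U₁ := by
      intro s hs
      by_contra hns
      exact absurd (csInf_le hbdd ⟨⟨hs.1, hs.2.le.trans hs₀S.1.2⟩, hns⟩) (not_le.2 hs.2)
    have hy₀cl : φ s₀ x ∈ closure U₁ := by
      have h1 : s₀ ∈ closure (Set.Ico 0 s₀) := by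
        rw [closure_Ico (ne_of_lt hs₀pos)]
        exact ⟨hs₀pos.le, le_rfl⟩
      exact (horb x).continuousWithinAt.mem_closure h1 hbefore
    have hzA : φ s₀ x ∈ A := ⟨hy₀cl, hnU⟩
    refine exclusion _ hzA (-s₀) (T - s₀) (by linarith) (by linarith [hs₀S.1.2, ht.2]) ?_ ?_
    · rw [← hφadd, neg_add_cancel, hφ0]; exact hx
    · rw [← hφadd, sub_add_cancel]; exact hxT
  · -- backward statement
    intro hxT t ht
    by_contra hnot
    set S : Set ℝ := Set.Icc t 0 ∩ (fun s => φ s x) ⁻¹' U₁ᶜ with hSdef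
    have hScl : IsClosed S := isClosed_Icc.inter (hU₁o.isClosed_compl.preimage (horb x))
    have htS : t ∈ S := ⟨⟨le_rfl, ht.2⟩, hnot⟩
    have hbdd : BddAbove S := ⟨0, fun s hs => hs.1.2⟩
    set s₀ : ℝ := sSup S with hs₀def
    have hs₀S : s₀ ∈ S := hScl.csSup_mem ⟨t, htS⟩ hbdd
    have hnU : φ s₀ x ∉ U₁ := hs₀S.2
    have hs₀neg : s₀ < 0 := by
      rcases hs₀S.1.2.lt_or_eq with h | h
      · exact h
      · exact absurd (show φ s₀ x ∈ U₁ by rw [h, hφ0]; exact hV₀U₁ hx) hnU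
    have hafter : ∀ s ∈ Set.Ioc s₀ 0, φ s x ∈ U₁ := by
      intro s hs
      by_contra hns
      exact absurd (le_csSup hbdd ⟨⟨hs₀S.1.1.trans hs.1.le, hs.2⟩, hns⟩) (not_le.2 hs.1)
    have hy₀cl : φ s₀ x ∈ closure U₁ := by
      have h1 : s₀ ∈ closure (Set.Ioc s₀ 0) := by
        rw [closure_Ioc (ne_of_lt hs₀neg)]
        exact ⟨le_rfl, hs₀neg.le⟩
      exact (horb x).continuousWithinAt.mem_closure h1 hafter
    have hzA : φ s₀ x ∈ A := ⟨hy₀cl, hnU⟩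
    refine exclusion _ hzA (-T - s₀) (-s₀) (by linarith [hs₀S.1.1, ht.1]) (by linarith) ?_ ?_
    · rw [← hφadd, sub_add_cancel]; exact hxT
    · rw [← hφadd, neg_add_cancel, hφ0]; exact hx
end

section
/- The following hold: (1) S is closed in U and has empty interior in U; (2) for every s₁ ∈ U there exist an open neighborhood V ⊆ U of s₁ and a holomorphic function f : V → ℂ, not identically zero, such that S ∩ V = f⁻¹(0) (so S is a complex analytic variety of codimension 1 in U); (3) the map defined on U ∖ S sending s to the (continuous linear) inverse P(s)⁻¹ ∈ L(F, E) is analytic on U ∖ S. -/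
/-!
Near any point `s₁ ∈ U`, bordering the Fredholm operator `P s₁` by its finite-dimensional
cokernel and kernel gives a block operator `[[P s, i], [p, 0]]` that is invertible for `s` close
to `s₁`, with analytic inverse (a Grushin problem). `P s` is bijective iff the lower-right block
`Δ s` of that inverse, a map between spaces of equal finite dimension, is bijective, i.e. iff an
analytic determinant `det Δ s` does not vanish. So `S` is locally the zero set of an analytic
function. By the identity theorem, the points of `U` adherent to `{P bijective}` form an open set
as well as a relatively closed one; it contains `s₀`, hence is all of `U` by connectedness, and
the local equations are not identically zero. Analyticity of `s ↦ P(s)⁻¹` comes from that of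
`Ring.inverse`.
-/

open Function Set Filter Topology Metric ContinuousLinearMap

theorem ContinuousLinearMap.isInvertible_iff_bijective {𝕜 E F : Type*} [NontriviallyNormedField 𝕜]
    [NormedAddCommGroup E] [NormedSpace 𝕜 E] [CompleteSpace E]
    [NormedAddCommGroup F] [NormedSpace 𝕜 F] [CompleteSpace F] {T : E →L[𝕜] F} :
    T.IsInvertible ↔ Bijective T :=
  ⟨IsInvertible.bijective, fun h =>
    ⟨.ofBijective T (LinearMap.ker_eq_bot.2 h.1) (LinearMap.range_eq_top.2 h.2), rfl⟩⟩

section Analytic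

variable {𝕜 : Type*} [NontriviallyNormedField 𝕜] {X A B C : Type*}
  [NormedAddCommGroup X] [NormedSpace 𝕜 X] [NormedAddCommGroup A] [NormedSpace 𝕜 A]
  [NormedAddCommGroup B] [NormedSpace 𝕜 B] [NormedAddCommGroup C] [NormedSpace 𝕜 C]

@[fun_prop]
theorem AnalyticAt.clm_comp {f : X → B →L[𝕜] C} {g : X → A →L[𝕜] B} {x : X}
    (hf : AnalyticAt 𝕜 f x) (hg : AnalyticAt 𝕜 g x) :
    AnalyticAt 𝕜 (fun y => (f y).comp (g y)) x :=
  ((compL 𝕜 A B C).analyticAt_bilinear (f x, g x)).comp₂ hf hg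

theorem AnalyticAt.clm_inverse [CompleteSpace A] {P : X → A →L[𝕜] B} {x : X}
    (hP : AnalyticAt 𝕜 P x) (hx : (P x).IsInvertible) :
    AnalyticAt 𝕜 (fun s => (P s).inverse) x := by
  obtain ⟨e, he⟩ := hx
  simp_rw [inverse_eq_ringInverse e]
  have hunit : IsUnit ((e.symm : B →L[𝕜] A).comp (P x)) := by
    rw [← he, ContinuousLinearEquiv.coe_symm_comp_coe]
    exact isUnit_one
  have hcomp : AnalyticAt 𝕜 (fun s => (e.symm : B →L[𝕜] A).comp (P s)) x :=
    analyticAt_const.clm_comp hP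
  exact ((analyticOnNhd_inverse (𝕜 := 𝕜) _ hunit).comp_of_eq hcomp rfl).clm_comp analyticAt_const

end Analytic

namespace ContinuousLinearMap

variable {R E F M N : Type*} [Ring R]
  [TopologicalSpace E] [AddCommGroup E] [Module R E]
  [TopologicalSpace F] [AddCommGroup F] [Module R F] [ContinuousAdd F]
  [TopologicalSpace M] [AddCommGroup M] [Module R M]
  [TopologicalSpace N] [AddCommGroup N] [Module R N]

def bordered (A : E →L[R] F) (i : M →L[R] F) (p : E →L[R] N) : E × M →L[R] F × N :=
  (A.coprod i).prod (p.comp (fst R E M))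

@[simp]
theorem bordered_apply (A : E →L[R] F) (i : M →L[R] F) (p : E →L[R] N) (x : E) (m : M) :
    bordered A i p (x, m) = (A x + i m, p x) :=
  rfl

theorem bijective_iff_bijective_of_isInvertible_bordered {A : E →L[R] F} {i : M →L[R] F}
    {p : E →L[R] N} (h : (bordered A i p).IsInvertible) :
    Bijective A ↔ Bijective (snd R E M ∘L (bordered A i p).inverse ∘L inr R F N) := by
  set Ω := (bordered A i p).inverse
  have hΘΩ : ∀ y ν, A (Ω (y, ν)).1 + i (Ω (y, ν)).2 = y ∧ p (Ω (y, ν)).1 = ν := fun y ν =>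
    Prod.ext_iff.mp (h.self_apply_inverse (y, ν))
  have hΩΘ : ∀ x m, Ω (A x + i m, p x) = (x, m) := fun x m => h.inverse_apply_self (x, m)
  have hΩ0 : Ω (0, 0) = 0 := map_zero Ω
  set Δ := snd R E M ∘L Ω ∘L inr R F N
  have hΔ : ∀ ν, Δ ν = (Ω (0, ν)).2 := fun _ => rfl
  simp only [Bijective, injective_iff_map_eq_zero, Surjective, hΔ]
  refine ⟨fun ⟨hinj, hsurj⟩ => ⟨fun ν hν => ?_, fun m => ?_⟩,
    fun ⟨hinj, hsurj⟩ => ⟨fun x hx => ?_, fun y => ?_⟩⟩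
  · obtain ⟨h₁, h₂⟩ := hΘΩ 0 ν
    rw [hν, map_zero, add_zero] at h₁
    rw [← h₂, hinj _ h₁, map_zero]
  · obtain ⟨x, hx⟩ := hsurj (-i m)
    refine ⟨p x, ?_⟩
    rw [← neg_add_cancel (i m), ← hx, hΩΘ]
  · have hpx := hΩΘ x 0
    rw [hx, map_zero, add_zero] at hpx
    have hp : p x = 0 := hinj _ (by rw [hpx])
    rw [hp, hΩ0] at hpx
    exact (congrArg Prod.fst hpx).symm
  · obtain ⟨ν, hν⟩ := hsurj (-(Ω (y, 0)).2)
    refine ⟨(Ω (y, 0)).1 + (Ω (0, ν)).1, ?_⟩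
    have h₁ := (hΘΩ y 0).1
    have h₂ := (hΘΩ 0 ν).1
    rw [hν, map_neg] at h₂
    calc A ((Ω (y, 0)).1 + (Ω (0, ν)).1)
        = (A (Ω (y, 0)).1 + i (Ω (y, 0)).2) + (A (Ω (0, ν)).1 + -i (Ω (y, 0)).2) := by
          rw [map_add]; abel
      _ = y := by rw [h₁, h₂, add_zero]

theorem bijective_bordered_of_isCompl (A : E →L[R] F) {W : Submodule R F}
    (hW : IsCompl (LinearMap.range (A : E →ₗ[R] F)) W)
    {π : E →L[R] LinearMap.ker (A : E →ₗ[R] F)}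
    (hπ : ∀ x : LinearMap.ker (A : E →ₗ[R] F), π x = x) :
    Bijective (bordered A W.subtypeL π) := by
  have hker : ∀ z : LinearMap.ker (A : E →ₗ[R] F), A z = 0 := fun z => z.2
  refine ⟨(injective_iff_map_eq_zero _).2 ?_, ?_⟩
  · rintro ⟨x, m⟩ h
    rw [bordered_apply, Prod.mk_eq_zero] at h
    obtain ⟨h₁, h₂⟩ := h
    have hAx : A x = 0 := by
      have hmem : A x ∈ LinearMap.range (A : E →ₗ[R] F) ⊓ W :=
        ⟨⟨x, rfl⟩, by rw [eq_neg_of_add_eq_zero_left h₁]; exact W.neg_mem m.2⟩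
      rwa [hW.inf_eq_bot, Submodule.mem_bot] at hmem
    have hx : x = 0 := by simpa [h₂] using (congrArg Subtype.val (hπ ⟨x, hAx⟩)).symm
    have hm : m = 0 := by simpa [hAx] using h₁
    simp [hx, hm]
  · rintro ⟨y, ν⟩
    have hy : y ∈ LinearMap.range (A : E →ₗ[R] F) ⊔ W := hW.sup_eq_top ▸ Submodule.mem_top
    obtain ⟨-, ⟨x, rfl⟩, m, hm, rfl⟩ := Submodule.mem_sup.1 hy
    refine ⟨(x - π x + ν, ⟨m, hm⟩), ?_⟩
    simp [hker, hπ]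

end ContinuousLinearMap

theorem exists_analytic_ne_zero_iff_bijective {𝕜 : Type*} [NontriviallyNormedField 𝕜]
    [CompleteSpace 𝕜] (N M : Type*) [NormedAddCommGroup N] [NormedSpace 𝕜 N]
    [NormedAddCommGroup M] [NormedSpace 𝕜 M] [FiniteDimensional 𝕜 N] [FiniteDimensional 𝕜 M] :
    ∃ g : (N →L[𝕜] M) → 𝕜, (∀ T, AnalyticAt 𝕜 g T) ∧ ∀ T, g T ≠ 0 ↔ Bijective T := by
  classical
  by_cases h : Module.finrank 𝕜 M = Module.finrank 𝕜 N
  swap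
  · refine ⟨0, fun _ => analyticAt_const, fun T => ?_⟩
    simpa using fun hT => h (LinearEquiv.ofBijective (T : N →ₗ[𝕜] M) hT).finrank_eq.symm
  let e := LinearEquiv.ofFinrankEq M N h
  let b := Module.finBasis 𝕜 N
  let entry (i j) : (N →L[𝕜] M) →L[𝕜] 𝕜 :=
    (LinearMap.toContinuousLinearMap (b.coord i ∘ₗ e.toLinearMap)).comp (apply 𝕜 M (b j))
  have hdet : ∀ T : N →L[𝕜] M, LinearMap.det (e.toLinearMap ∘ₗ T.toLinearMap) =
      ∑ σ : Equiv.Perm _, (Equiv.Perm.sign σ : 𝕜) * ∏ i, entry (σ i) i T := by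
    intro T
    rw [← LinearMap.det_toMatrix b, Matrix.det_apply']
    simp only [LinearMap.toMatrix_apply]
    rfl
  refine ⟨fun T => LinearMap.det (e.toLinearMap ∘ₗ T.toLinearMap), fun T => ?_, fun T => ?_⟩
  · simp_rw [hdet]
    have hentry := fun i j => (entry i j).analyticAt T
    fun_prop
  · dsimp only
    rw [← isUnit_iff_ne_zero, ← LinearMap.isUnit_iff_isUnit_det, Module.End.isUnit_iff,
      LinearMap.coe_comp, LinearEquiv.coe_coe, e.bijective.of_comp_iff']
    rfl

theorem exists_analytic_ne_zero_iff_bijective_of_fredholm {𝕜 X E F : Type*} [RCLike 𝕜]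
    [NormedAddCommGroup X] [NormedSpace 𝕜 X]
    [NormedAddCommGroup E] [NormedSpace 𝕜 E] [CompleteSpace E]
    [NormedAddCommGroup F] [NormedSpace 𝕜 F] [CompleteSpace F]
    {P : X → E →L[𝕜] F} {s₁ : X} (hP : ∀ᶠ s in 𝓝 s₁, AnalyticAt 𝕜 P s)
    (hker : FiniteDimensional 𝕜 (LinearMap.ker (P s₁ : E →ₗ[𝕜] F)))
    (hcoker : FiniteDimensional 𝕜 (F ⧸ LinearMap.range (P s₁ : E →ₗ[𝕜] F))) :
    ∃ f : X → 𝕜, ∀ᶠ s in 𝓝 s₁, AnalyticAt 𝕜 f s ∧ (f s ≠ 0 ↔ Bijective (P s)) := by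
  set N := LinearMap.ker (P s₁ : E →ₗ[𝕜] F)
  obtain ⟨π, hπ⟩ := Submodule.ClosedComplemented.of_finiteDimensional N
  obtain ⟨W, hW⟩ := (LinearMap.range (P s₁ : E →ₗ[𝕜] F)).exists_isCompl
  have : FiniteDimensional 𝕜 W := (Submodule.quotientEquivOfIsCompl _ W hW).finiteDimensional
  obtain ⟨g, hg_an, hg⟩ := exists_analytic_ne_zero_iff_bijective (𝕜 := 𝕜) N W
  set Θ := fun s => bordered (P s) W.subtypeL π
  have hΘ_eq : Θ = fun s => inl 𝕜 F N ∘L P s ∘L fst 𝕜 E W + bordered 0 W.subtypeL π := by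
    ext s x <;> simp [Θ]
  have hΘ_an : ∀ᶠ s in 𝓝 s₁, AnalyticAt 𝕜 Θ s := hP.mono fun s hs => by
    rw [hΘ_eq]
    fun_prop
  have hΘ₁ : (Θ s₁).IsInvertible :=
    isInvertible_iff_bijective.2 (bijective_bordered_of_isCompl _ hW hπ)
  have hΘ_inv : ∀ᶠ s in 𝓝 s₁, (Θ s).IsInvertible :=
    hΘ_an.self_of_nhds.continuousAt.eventually_mem (ContinuousLinearEquiv.isOpen.mem_nhds hΘ₁)
  refine ⟨fun s => g (snd 𝕜 E W ∘L (Θ s).inverse ∘L inr 𝕜 F N), ?_⟩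
  filter_upwards [hΘ_an, hΘ_inv] with s hs_an hs_inv
  exact ⟨(hg_an _).comp (analyticAt_const.clm_comp
      ((hs_an.clm_inverse hs_inv).clm_comp analyticAt_const)),
    (hg _).trans (bijective_iff_bijective_of_isInvertible_bordered hs_inv).symm⟩

section IdentityTheorem

variable {𝕜 X G : Type*} [RCLike 𝕜] [NormedAddCommGroup X] [NormedSpace 𝕜 X]
  [NormedAddCommGroup G] [NormedSpace 𝕜 G] {f : X → G} {Z : Set X} {x : X}

theorem mem_nhds_of_eventually_analyticAt_ne_zero_iff
    (hf : ∀ᶠ y in 𝓝 x, AnalyticAt 𝕜 f y ∧ (f y ≠ 0 ↔ y ∈ Z)) (hx : x ∈ Z) : Z ∈ 𝓝 x := by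
  have hfx : f x ≠ 0 := hf.self_of_nhds.2.2 hx
  filter_upwards [hf, hf.self_of_nhds.1.continuousAt.eventually_ne hfx] with y hy hfy
  exact hy.2.1 hfy

theorem closure_mem_nhds_of_eventually_analyticAt_ne_zero_iff
    (hf : ∀ᶠ y in 𝓝 x, AnalyticAt 𝕜 f y ∧ (f y ≠ 0 ↔ y ∈ Z)) (hx : x ∈ closure Z) :
    closure Z ∈ 𝓝 x := by
  -- only needed to know that balls are preconnected
  let _ : NormedSpace ℝ X := NormedSpace.restrictScalars ℝ 𝕜 X
  obtain ⟨r, hr, hball⟩ := Metric.mem_nhds_iff.1 hf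
  refine mem_of_superset (ball_mem_nhds x hr) fun v hv => ?_
  by_contra hvZ
  have hzero : f =ᶠ[𝓝 v] 0 := by
    filter_upwards [isOpen_ball.mem_nhds hv, isClosed_closure.isOpen_compl.mem_nhds hvZ]
      with y hy hyZ
    by_contra hfy
    exact hyZ (subset_closure ((hball hy).2.1 hfy))
  obtain ⟨z, hz, hzZ⟩ := mem_closure_iff.1 hx _ isOpen_ball (mem_ball_self hr)
  have hf_an : AnalyticOnNhd 𝕜 f (ball x r) := fun y hy => (hball hy).1
  exact (hball hz).2.2 hzZ (hf_an.eqOn_zero_of_preconnected_of_eventuallyEq_zero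
    isPreconnected_ball hv hzero hz)

theorem exists_isOpen_analyticOnNhd_eq_zero_iff_notMem
    (hf : ∀ᶠ y in 𝓝 x, AnalyticAt 𝕜 f y ∧ (f y ≠ 0 ↔ y ∈ Z)) (hx : x ∈ closure Z) {U : Set X}
    (hU : U ∈ 𝓝 x) : ∃ V, IsOpen V ∧ x ∈ V ∧ V ⊆ U ∧ AnalyticOnNhd 𝕜 f V ∧
      (∃ y ∈ V, f y ≠ 0) ∧ ∀ y ∈ V, (f y = 0 ↔ y ∉ Z) := by
  obtain ⟨r, hr, hball⟩ := Metric.mem_nhds_iff.1 (hf.and hU)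
  obtain ⟨y, hy, hyZ⟩ := mem_closure_iff.1 hx _ isOpen_ball (mem_ball_self hr)
  exact ⟨ball x r, isOpen_ball, mem_ball_self hr, fun z hz => (hball hz).2,
    fun z hz => (hball hz).1.1, ⟨y, hy, (hball hy).1.2.2 hyZ⟩,
    fun z hz => not_not.symm.trans (hball hz).1.2.not⟩

theorem IsPreconnected.subset_closure_of_eventually_analyticAt_ne_zero_iff {U : Set X}
    (hU : IsPreconnected U)
    (hloc : ∀ s ∈ U, ∃ f : X → G, ∀ᶠ y in 𝓝 s, AnalyticAt 𝕜 f y ∧ (f y ≠ 0 ↔ y ∈ Z))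
    (hne : (U ∩ Z).Nonempty) : U ⊆ closure Z := by
  refine (hU.subset_of_closure_inter_subset isOpen_interior ?_ ?_).trans interior_subset
  · obtain ⟨s₀, hs₀U, hs₀Z⟩ := hne
    obtain ⟨f, hf⟩ := hloc s₀ hs₀U
    exact ⟨s₀, hs₀U, mem_interior_iff_mem_nhds.2
      (mem_of_superset (mem_nhds_of_eventually_analyticAt_ne_zero_iff hf hs₀Z) subset_closure)⟩
  · rintro s ⟨hs, hsU⟩
    obtain ⟨f, hf⟩ := hloc s hsU
    exact mem_interior_iff_mem_nhds.2 (closure_mem_nhds_of_eventually_analyticAt_ne_zero_iff hf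
      (closure_minimal interior_subset isClosed_closure hs))

end IdentityTheorem

theorem stmt6_general {E F : Type*}
    [NormedAddCommGroup E] [NormedSpace ℂ E] [CompleteSpace E]
    [NormedAddCommGroup F] [NormedSpace ℂ F] [CompleteSpace F]
    {n : ℕ}
    (U : Set (Fin n → ℂ)) (hUopen : IsOpen U)
    (hUconn : IsConnected U)
    (P : (Fin n → ℂ) → (E →L[ℂ] F)) (hP : AnalyticOnNhd ℂ P U)
    (hFred : ∀ s ∈ U, FiniteDimensional ℂ (LinearMap.ker (P s : E →ₗ[ℂ] F)) ∧
        IsClosed ((LinearMap.range (P s : E →ₗ[ℂ] F) : Submodule ℂ F) : Set F) ∧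
        FiniteDimensional ℂ (F ⧸ LinearMap.range (P s : E →ₗ[ℂ] F)))
    (s₀ : Fin n → ℂ) (hs₀ : s₀ ∈ U) (hbij : Function.Bijective (P s₀)) :
    (∃ T : Set (Fin n → ℂ), IsClosed T ∧
        {s ∈ U | ¬ Function.Bijective (P s)} = T ∩ U) ∧
    interior {s ∈ U | ¬ Function.Bijective (P s)} = ∅ ∧
    (∀ s₁ ∈ U, ∃ V : Set (Fin n → ℂ), IsOpen V ∧ s₁ ∈ V ∧ V ⊆ U ∧
        ∃ f : (Fin n → ℂ) → ℂ, AnalyticOnNhd ℂ f V ∧ (∃ s ∈ V, f s ≠ 0) ∧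
          {s ∈ U | ¬ Function.Bijective (P s)} ∩ V = {s ∈ V | f s = 0}) ∧
    (∃ Q : (Fin n → ℂ) → (F →L[ℂ] E),
        AnalyticOnNhd ℂ Q (U \ {s ∈ U | ¬ Function.Bijective (P s)}) ∧
        ∀ s ∈ U \ {s ∈ U | ¬ Function.Bijective (P s)},
          (P s).comp (Q s) = ContinuousLinearMap.id ℂ F ∧
          (Q s).comp (P s) = ContinuousLinearMap.id ℂ E) := by
  set B := {s | Bijective (P s)}
  have hloc : ∀ s ∈ U, ∃ f : (Fin n → ℂ) → ℂ,
      ∀ᶠ t in 𝓝 s, AnalyticAt ℂ f t ∧ (f t ≠ 0 ↔ t ∈ B) := fun s hs =>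
    exists_analytic_ne_zero_iff_bijective_of_fredholm ((hUopen.eventually_mem hs).mono hP)
      (hFred s hs).1 (hFred s hs).2.2
  have hopen : IsOpen (U ∩ B) := isOpen_iff_mem_nhds.2 fun s ⟨hs, hsB⟩ => by
    obtain ⟨f, hf⟩ := hloc s hs
    exact inter_mem (hUopen.mem_nhds hs) (mem_nhds_of_eventually_analyticAt_ne_zero_iff hf hsB)
  have hdense : U ⊆ closure B :=
    hUconn.isPreconnected.subset_closure_of_eventually_analyticAt_ne_zero_iff hloc ⟨s₀, hs₀, hbij⟩
  have hinv : ∀ s ∈ U \ {s ∈ U | ¬ Bijective (P s)}, (P s).IsInvertible := fun s ⟨hsU, hs⟩ =>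
    isInvertible_iff_bijective.2 (not_not.1 fun h => hs ⟨hsU, h⟩)
  refine ⟨⟨(U ∩ B)ᶜ, hopen.isClosed_compl, ?_⟩, ?_, fun s₁ hs₁ => ?_,
    ⟨fun s => (P s).inverse, fun s hs => (hP s hs.1).clm_inverse (hinv s hs),
      fun s hs => ⟨(hinv s hs).self_comp_inverse, (hinv s hs).inverse_comp_self⟩⟩⟩
  · ext s
    simp only [B, mem_ofPred_eq, mem_inter_iff, mem_compl_iff]
    tauto
  · refine eq_empty_of_forall_notMem fun s hs => ?_
    obtain ⟨t, ht, htB⟩ := mem_closure_iff.1 (hdense (interior_subset hs).1) _ isOpen_interior hs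
    exact (interior_subset ht).2 htB
  · obtain ⟨f, hf⟩ := hloc s₁ hs₁
    obtain ⟨V, hV, hs₁V, hVU, hf_an, hf_ne, hf_zero⟩ :=
      exists_isOpen_analyticOnNhd_eq_zero_iff_notMem hf (hdense hs₁) (hUopen.mem_nhds hs₁)
    refine ⟨V, hV, hs₁V, hVU, f, hf_an, hf_ne, ?_⟩
    ext t
    exact ⟨fun ⟨⟨_, hnb⟩, ht⟩ => ⟨ht, (hf_zero t ht).2 hnb⟩,
      fun ⟨ht, hft⟩ => ⟨⟨hVU ht, (hf_zero t ht).1 hft⟩, ht⟩⟩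

/-- Multivariable analytic Fredholm theorem, part I.  Let `P : U → L(E, F)` be an
analytic family of Fredholm operators on a nonempty connected open set `U ⊆ ℂⁿ`,
invertible at some point `s₀ ∈ U`, and let `S` be the set of points of `U` where `P`
is not bijective.  Then: (1) `S` is closed in `U` and has empty interior;
(2) locally `S` is the zero set of a non-identically-vanishing holomorphic function
(a complex analytic variety of codimension 1); (3) `s ↦ P(s)⁻¹` is analytic on `U ∖ S`. -/
theorem stmt6 {E F : Type*}
    [NormedAddCommGroup E] [NormedSpace ℂ E] [CompleteSpace E]
    [NormedAddCommGroup F] [NormedSpace ℂ F] [CompleteSpace F]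
    {n : ℕ} (hn : 1 ≤ n)
    (U : Set (Fin n → ℂ)) (hUopen : IsOpen U) (hUne : U.Nonempty)
    (hUconn : IsConnected U)
    (P : (Fin n → ℂ) → (E →L[ℂ] F)) (hP : AnalyticOnNhd ℂ P U)
    (hFred : ∀ s ∈ U, FiniteDimensional ℂ (LinearMap.ker (P s : E →ₗ[ℂ] F)) ∧
        IsClosed ((LinearMap.range (P s : E →ₗ[ℂ] F) : Submodule ℂ F) : Set F) ∧
        FiniteDimensional ℂ (F ⧸ LinearMap.range (P s : E →ₗ[ℂ] F)))
    (s₀ : Fin n → ℂ) (hs₀ : s₀ ∈ U) (hbij : Function.Bijective (P s₀)) :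
    (∃ T : Set (Fin n → ℂ), IsClosed T ∧
        {s ∈ U | ¬ Function.Bijective (P s)} = T ∩ U) ∧
    interior {s ∈ U | ¬ Function.Bijective (P s)} = ∅ ∧
    (∀ s₁ ∈ U, ∃ V : Set (Fin n → ℂ), IsOpen V ∧ s₁ ∈ V ∧ V ⊆ U ∧
        ∃ f : (Fin n → ℂ) → ℂ, AnalyticOnNhd ℂ f V ∧ (∃ s ∈ V, f s ≠ 0) ∧
          {s ∈ U | ¬ Function.Bijective (P s)} ∩ V = {s ∈ V | f s = 0}) ∧
    (∃ Q : (Fin n → ℂ) → (F →L[ℂ] E),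
        AnalyticOnNhd ℂ Q (U \ {s ∈ U | ¬ Function.Bijective (P s)}) ∧
        ∀ s ∈ U \ {s ∈ U | ¬ Function.Bijective (P s)},
          (P s).comp (Q s) = ContinuousLinearMap.id ℂ F ∧
          (Q s).comp (P s) = ContinuousLinearMap.id ℂ E) :=
  stmt6_general U hUopen hUconn P hP hFred s₀ hs₀ hbij
end

section
/- Let k ≥ 1 be an integer. There exists a constant C > 0, depending only on k, such that for every real R ≥ 1, every ξ ∈ ℝ^k with ‖ξ‖ ≥ 1, and every δ > 0, the Lebesgue measure of the set {(λ₀, …, λ_k) ∈ ((−2πR, 2πR)^k)^{k+1} : |e^{i⟨λ_ℓ, ξ⟩} − 1| ≤ δ for all ℓ ∈ {0, …, k}} is at most C·R^{k(k+1)}·δ^{k+1}. -/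
/-!
The set is the `(k+1)`-fold power of `A = {x ∈ (-2πR, 2πR)^k : |e^{i⟨x, ξ⟩} - 1| ≤ δ}`, so it
suffices to show `vol A ≲ R^k δ`. Enlarge the cube to a ball and apply the reflection taking `ξ`
to `‖ξ‖ eᵢ`: `A` becomes a subset of a box one of whose sides is replaced by
`{t : |e^{i‖ξ‖t} - 1| ≤ δ}`. By Jordan's inequality `|e^{iθ} - 1| ≤ δ` puts `θ` within `πδ/2` of
`2πℤ`, so on an interval of length `2L` this set has measure `O((L + 1) δ)` as `‖ξ‖ ≥ 1`.
-/

open MeasureTheory RealInnerProductSpace Real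
open scoped ENNReal

lemma abs_sub_two_pi_mul_round_le (θ : ℝ) : |θ - 2 * π * round (θ / (2 * π))| ≤ π := by
  have hscale : θ - 2 * π * round (θ / (2 * π)) = 2 * π * (θ / (2 * π) - round (θ / (2 * π))) := by
    field_simp
  rw [hscale, abs_mul, abs_of_pos (by positivity)]
  nlinarith [pi_pos, abs_sub_round (θ / (2 * π))]

lemma abs_sub_two_pi_mul_round_le_of_norm_exp_sub_one_le {θ δ : ℝ}
    (h : ‖Complex.exp (Complex.I * θ) - 1‖ ≤ δ) :
    |θ - 2 * π * round (θ / (2 * π))| ≤ π * δ / 2 := by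
  set x := θ - 2 * π * round (θ / (2 * π))
  have hsin : |sin (θ / 2)| = |sin (x / 2)| := by
    rw [show θ / 2 = x / 2 + round (θ / (2 * π)) * π by ring, sin_add_int_mul_pi, abs_mul,
      abs_neg_one_zpow, one_mul]
  have hjordan : 2 / π * |x / 2| ≤ |sin (x / 2)| :=
    mul_abs_le_abs_sin (by rw [abs_div, abs_two]; linarith [abs_sub_two_pi_mul_round_le θ])
  rw [Complex.norm_exp_I_mul_ofReal_sub_one, norm_mul, Real.norm_eq_abs, Real.norm_eq_abs,
    abs_two, hsin] at h
  calc |x| = π * (2 / π * |x / 2|) := by rw [abs_div, abs_two]; field_simp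
    _ ≤ π * (δ / 2) := by gcongr; linarith
    _ = π * δ / 2 := by ring

lemma round_div_two_pi_mem_Icc {θ M : ℝ} (hθ : |θ| ≤ M) :
    round (θ / (2 * π)) ∈ Finset.Icc (-⌈M / (2 * π)⌉₊ : ℤ) ⌈M / (2 * π)⌉₊ := by
  set N : ℕ := ⌈M / (2 * π)⌉₊
  have hMN : M ≤ 2 * π * N := by
    have := Nat.le_ceil (M / (2 * π))
    rwa [div_le_iff₀ (by positivity), mul_comm] at this
  obtain ⟨hθ₁, hθ₂⟩ := abs_le.1 hθ
  obtain ⟨hx₁, hx₂⟩ := abs_le.1 (abs_sub_two_pi_mul_round_le θ)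
  have hlt : ((round (θ / (2 * π)) : ℤ) : ℝ) < N + 1 := by nlinarith [pi_pos]
  have hgt : -(N + 1 : ℝ) < ((round (θ / (2 * π)) : ℤ) : ℝ) := by nlinarith [pi_pos]
  have hlt' : round (θ / (2 * π)) < N + 1 := by exact_mod_cast hlt
  have hgt' : -(N + 1 : ℤ) < round (θ / (2 * π)) := by exact_mod_cast hgt
  rw [Finset.mem_Icc]
  omega

lemma volume_abs_le_norm_exp_sub_one_le {M δ : ℝ} (hM : 0 ≤ M) (hδ : 0 ≤ δ) :
    volume {θ : ℝ | |θ| ≤ M ∧ ‖Complex.exp (Complex.I * θ) - 1‖ ≤ δ}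
      ≤ ENNReal.ofReal ((M / π + 3) * (π * δ)) := by
  set N : ℕ := ⌈M / (2 * π)⌉₊
  have hcover : {θ : ℝ | |θ| ≤ M ∧ ‖Complex.exp (Complex.I * θ) - 1‖ ≤ δ}
      ⊆ ⋃ n ∈ Finset.Icc (-N : ℤ) N, Metric.closedBall (2 * π * n) (π * δ / 2) := by
    rintro θ ⟨hθ, hexp⟩
    exact Set.mem_biUnion (round_div_two_pi_mem_Icc hθ)
      (abs_sub_two_pi_mul_round_le_of_norm_exp_sub_one_le hexp)
  calc volume _ ≤ volume (⋃ n ∈ Finset.Icc (-N : ℤ) N, Metric.closedBall (2 * π * n) (π * δ / 2)) :=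
        measure_mono hcover
    _ ≤ ∑ n ∈ Finset.Icc (-N : ℤ) N, volume (Metric.closedBall (2 * π * n) (π * δ / 2)) :=
        measure_biUnion_finset_le _ _
    _ = ENNReal.ofReal ((2 * N + 1) * (π * δ)) := by
        simp_rw [Real.volume_closedBall]
        rw [Finset.sum_const, Int.card_Icc, nsmul_eq_mul,
          show (N + 1 - -N : ℤ) = ((2 * N + 1 : ℕ) : ℤ) by push_cast; ring, Int.toNat_natCast,
          ← ENNReal.ofReal_natCast, ← ENNReal.ofReal_mul (by positivity)]
        congr 1
        push_cast
        ring
    _ ≤ ENNReal.ofReal ((M / π + 3) * (π * δ)) := by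
        apply ENNReal.ofReal_le_ofReal
        gcongr ?_ * _
        have hN : (N : ℝ) < M / (2 * π) + 1 := Nat.ceil_lt_add_one (by positivity)
        have : M / (2 * π) = M / π / 2 := by ring
        linarith

lemma volume_abs_le_norm_exp_mul_sub_one_le {a L δ : ℝ} (ha : 1 ≤ a) (hL : 0 ≤ L) (hδ : 0 ≤ δ) :
    volume {t : ℝ | |t| ≤ L ∧ ‖Complex.exp (Complex.I * ↑(a * t)) - 1‖ ≤ δ}
      ≤ ENNReal.ofReal ((L + 3 * π) * δ) := by
  have ha₀ : 0 < a := by linarith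
  have hscale : {t : ℝ | |t| ≤ L ∧ ‖Complex.exp (Complex.I * ↑(a * t)) - 1‖ ≤ δ}
      = (a * ·) ⁻¹' {θ : ℝ | |θ| ≤ a * L ∧ ‖Complex.exp (Complex.I * θ) - 1‖ ≤ δ} := by
    ext t
    simp [abs_mul, abs_of_pos ha₀, mul_le_mul_iff_right₀ ha₀]
  rw [hscale, Real.volume_preimage_mul_left ha₀.ne']
  calc _ ≤ ENNReal.ofReal |a⁻¹| * ENNReal.ofReal ((a * L / π + 3) * (π * δ)) := by
        gcongr
        exact volume_abs_le_norm_exp_sub_one_le (by positivity) hδ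
    _ = ENNReal.ofReal ((L + 3 * π / a) * δ) := by
        rw [← ENNReal.ofReal_mul (abs_nonneg _), abs_of_pos (inv_pos.2 ha₀)]
        congr 1
        field_simp
    _ ≤ ENNReal.ofReal ((L + 3 * π) * δ) := by
        gcongr
        exact div_le_self (by positivity) ha

lemma norm_le_sqrt_card_mul_of_forall_abs_le {ι : Type*} [Fintype ι] {x : EuclideanSpace ℝ ι}
    {L : ℝ} (hL : 0 ≤ L) (hx : ∀ i, |x i| ≤ L) : ‖x‖ ≤ √(Fintype.card ι) * L := by
  rw [EuclideanSpace.norm_eq, ← Real.sqrt_sq hL, ← Real.sqrt_mul (Nat.cast_nonneg _)]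
  gcongr
  calc ∑ i, ‖x i‖ ^ 2 ≤ ∑ _i : ι, L ^ 2 :=
        Finset.sum_le_sum fun i _ => by
          rw [Real.norm_eq_abs]
          exact pow_le_pow_left₀ (abs_nonneg _) (hx i) 2
    _ = Fintype.card ι * L ^ 2 := by simp

lemma nonempty_of_euclideanSpace_ne_zero {ι : Type*} [Fintype ι] {x : EuclideanSpace ℝ ι}
    (hx : x ≠ 0) : Nonempty ι :=
  not_isEmpty_iff.1 fun _ => hx (Subsingleton.elim _ _)

lemma volume_norm_le_norm_exp_inner_sub_one_le {ι : Type*} [Fintype ι] {ξ : EuclideanSpace ℝ ι}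
    (hξ : 1 ≤ ‖ξ‖) {L δ : ℝ} (hL : 0 ≤ L) (hδ : 0 ≤ δ) :
    volume {x : EuclideanSpace ℝ ι | ‖x‖ ≤ L ∧ ‖Complex.exp (Complex.I * ⟪x, ξ⟫) - 1‖ ≤ δ}
      ≤ ENNReal.ofReal ((2 * L) ^ (Fintype.card ι - 1) * ((L + 3 * π) * δ)) := by
  classical
  obtain ⟨i₀⟩ := nonempty_of_euclideanSpace_ne_zero (norm_pos_iff.1 (by linarith) : ξ ≠ 0)
  set w := EuclideanSpace.single i₀ ‖ξ‖
  set ρ := Submodule.reflection (ℝ ∙ (ξ - w))ᗮ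
  have hρξ : ρ ξ = w := Submodule.reflection_sub (by simp [w])
  set S := {t : ℝ | |t| ≤ L ∧ ‖Complex.exp (Complex.I * ↑(‖ξ‖ * t)) - 1‖ ≤ δ}
  set T : Set (ι → ℝ) := Set.univ.pi (Function.update (fun _ => Set.Icc (-L) L) i₀ S)
  have hsub : {x : EuclideanSpace ℝ ι | ‖x‖ ≤ L ∧ ‖Complex.exp (Complex.I * ⟪x, ξ⟫) - 1‖ ≤ δ}
      ⊆ (fun x => WithLp.ofLp (ρ x)) ⁻¹' T := by
    rintro x ⟨hx, hexp⟩ i -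
    have hi : |ρ x i| ≤ L := (PiLp.norm_apply_le (ρ x) i).trans ((ρ.norm_map x).trans_le hx)
    rcases eq_or_ne i i₀ with rfl | hne
    · have hinner : ⟪x, ξ⟫ = ‖ξ‖ * ρ x i := by
        rw [← ρ.inner_map_map, hρξ, EuclideanSpace.inner_single_right]
        simp
      rw [Function.update_self]
      exact ⟨hi, by rwa [← hinner]⟩
    · rw [Function.update_of_ne hne]
      exact abs_le.1 hi
  have hmp : MeasurePreserving (fun x => WithLp.ofLp (ρ x)) :=
    (PiLp.volume_preserving_ofLp ι).comp ρ.measurePreserving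
  calc _ ≤ volume ((fun x => WithLp.ofLp (ρ x)) ⁻¹' T) := measure_mono hsub
    _ ≤ volume T := hmp.measure_preimage_le T
    _ = volume S * ∏ i ∈ {i₀}ᶜ, volume (Set.Icc (-L) L) := by
        rw [volume_pi_pi, Fintype.prod_eq_mul_prod_compl i₀, Function.update_self]
        congr 1
        refine Finset.prod_congr rfl fun i hi => ?_
        rw [Function.update_of_ne (by simpa using hi)]
    _ = volume S * ENNReal.ofReal (2 * L) ^ (Fintype.card ι - 1) := by
        rw [Finset.prod_const, Finset.card_compl, Finset.card_singleton, Real.volume_Icc,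
          sub_neg_eq_add, two_mul]
    _ ≤ ENNReal.ofReal ((L + 3 * π) * δ) * ENNReal.ofReal (2 * L) ^ (Fintype.card ι - 1) := by
        gcongr
        exact volume_abs_le_norm_exp_mul_sub_one_le hξ hL hδ
    _ = ENNReal.ofReal ((2 * L) ^ (Fintype.card ι - 1) * ((L + 3 * π) * δ)) := by
        rw [← ENNReal.ofReal_pow (by positivity), ← ENNReal.ofReal_mul (by positivity), mul_comm]

lemma volume_cube_inter_norm_exp_inner_sub_one_le {ι : Type*} [Fintype ι]
    {ξ : EuclideanSpace ℝ ι} (hξ : 1 ≤ ‖ξ‖) {R δ : ℝ} (hR : 1 ≤ R) (hδ : 0 ≤ δ) :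
    volume {x : EuclideanSpace ℝ ι | (∀ i, x i ∈ Set.Ioo (-(2 * π * R)) (2 * π * R)) ∧
        ‖Complex.exp (Complex.I * ⟪x, ξ⟫) - 1‖ ≤ δ}
      ≤ ENNReal.ofReal ((4 * π * (√(Fintype.card ι) + 1) * R) ^ Fintype.card ι * δ) := by
  have : Nonempty ι := nonempty_of_euclideanSpace_ne_zero (norm_pos_iff.1 (by linarith) : ξ ≠ 0)
  set n := Fintype.card ι
  set L := √n * (2 * π * R)
  have hπR : 0 ≤ 2 * π * R := by positivity
  refine (measure_mono ?_).trans <| (volume_norm_le_norm_exp_inner_sub_one_le hξ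
    (by positivity : 0 ≤ L) hδ).trans (ENNReal.ofReal_le_ofReal ?_)
  · rintro x ⟨hx, hexp⟩
    exact ⟨norm_le_sqrt_card_mul_of_forall_abs_le hπR
      fun i => abs_le.2 ⟨(hx i).1.le, (hx i).2.le⟩, hexp⟩
  · set c := 4 * π * (√n + 1) * R
    have hn : 0 ≤ √(n : ℝ) := Real.sqrt_nonneg _
    have h2L : 2 * L ≤ c := by nlinarith [pi_pos]
    have hL3 : L + 3 * π ≤ c := by nlinarith [pi_pos]
    calc (2 * L) ^ (n - 1) * ((L + 3 * π) * δ) ≤ c ^ (n - 1) * (c * δ) := by gcongr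
      _ = c ^ n * δ := by rw [← mul_assoc, pow_sub_one_mul Fintype.card_ne_zero]

theorem stmt11_general (k : ℕ) :
    ∃ C > (0:ℝ), ∀ R : ℝ, 1 ≤ R → ∀ ξ : EuclideanSpace ℝ (Fin k), 1 ≤ ‖ξ‖ →
      ∀ δ : ℝ, 0 < δ →
        volume {lam : Fin (k + 1) → EuclideanSpace ℝ (Fin k) |
            (∀ ℓ : Fin (k + 1), ∀ i : Fin k,
              lam ℓ i ∈ Set.Ioo (-(2 * π * R)) (2 * π * R)) ∧
            ∀ ℓ : Fin (k + 1),
              ‖Complex.exp (Complex.I * (⟪lam ℓ, ξ⟫ : ℝ)) - 1‖ ≤ δ}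
          ≤ ENNReal.ofReal (C * R ^ (k * (k + 1)) * δ ^ (k + 1)) := by
  refine ⟨(4 * π * (√k + 1)) ^ (k * (k + 1)), by positivity, fun R hR ξ hξ δ hδ => ?_⟩
  set A := {x : EuclideanSpace ℝ (Fin k) | (∀ i, x i ∈ Set.Ioo (-(2 * π * R)) (2 * π * R)) ∧
    ‖Complex.exp (Complex.I * ⟪x, ξ⟫) - 1‖ ≤ δ}
  have hA : volume A ≤ ENNReal.ofReal ((4 * π * (√k + 1) * R) ^ k * δ) := by
    have := volume_cube_inter_norm_exp_inner_sub_one_le hξ hR hδ.le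
    rwa [Fintype.card_fin] at this
  calc _ ≤ volume (Set.univ.pi fun _ : Fin (k + 1) => A) :=
        measure_mono fun lam hlam ℓ _ => ⟨hlam.1 ℓ, hlam.2 ℓ⟩
    _ ≤ ENNReal.ofReal ((4 * π * (√k + 1) * R) ^ k * δ) ^ (k + 1) := by
        rw [volume_pi_pi, Finset.prod_const, Finset.card_univ, Fintype.card_fin]
        gcongr
    _ = ENNReal.ofReal ((4 * π * (√k + 1)) ^ (k * (k + 1)) * R ^ (k * (k + 1)) * δ ^ (k + 1)) := by
        rw [← ENNReal.ofReal_pow (by positivity), mul_pow, mul_pow, mul_pow, pow_mul, pow_mul]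

/-- There is a constant `C > 0` depending only on `k` such that for every `R ≥ 1`, every
`ξ ∈ ℝ^k` with `‖ξ‖ ≥ 1` and every `δ > 0`, the Lebesgue measure of the set of tuples
`(λ₀, …, λ_k) ∈ ((−2πR, 2πR)^k)^{k+1}` with `|e^{i⟨λ_ℓ, ξ⟩} − 1| ≤ δ` for all `ℓ`
is at most `C·R^{k(k+1)}·δ^{k+1}`. -/
theorem stmt11 (k : ℕ) (hk : 1 ≤ k) :
    ∃ C > (0:ℝ), ∀ R : ℝ, 1 ≤ R → ∀ ξ : EuclideanSpace ℝ (Fin k), 1 ≤ ‖ξ‖ →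
      ∀ δ : ℝ, 0 < δ →
        volume {lam : Fin (k + 1) → EuclideanSpace ℝ (Fin k) |
            (∀ ℓ : Fin (k + 1), ∀ i : Fin k,
              lam ℓ i ∈ Set.Ioo (-(2 * π * R)) (2 * π * R)) ∧
            ∀ ℓ : Fin (k + 1),
              ‖Complex.exp (Complex.I * (⟪lam ℓ, ξ⟫ : ℝ)) - 1‖ ≤ δ}
          ≤ ENNReal.ofReal (C * R ^ (k * (k + 1)) * δ ^ (k + 1)) :=
  stmt11_general k
end

section
/- Assume moreover that Δ is crystallographic: 2⟨β, α⟩/⟨α, α⟩ ∈ ℤ for all α, β ∈ Δ. If α₁, α₂ ∈ Δ satisfy π_A(α₁) = π_A(α₂) ≠ 0, then there exist an integer ℓ ≥ 0 and roots γ₁, …, γ_ℓ ∈ Δ with ⟨γ_i, H₀⟩ = 0 for all i (i.e. γ_i ∈ Δ⁰) such that α₁ + γ₁ + ⋯ + γ_r ∈ Δ for every 1 ≤ r ≤ ℓ and α₁ + γ₁ + ⋯ + γ_ℓ = α₂. -/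
/-!
Let `S` be the set of roots reachable from `α₁` by adding roots of `Δ⁰` one at a time while
staying in `Δ`. Every root of `S` differs from `α₁` by an element of `Aᗮ`, so none of them lies in
`Δ⁰`; a root-string argument then shows that `S` is stable under each reflection `s_γ`,
`γ ∈ Δ⁰`. Hence `σ = ∑_{δ ∈ S} δ` is fixed by these reflections, i.e. `σ ∈ A`, and
`‖σ‖² = |S| ⟪α₂, σ⟫` with `σ ≠ 0` because `α₁ ∉ Aᗮ`. So some `δ ∈ S` makes an acute angle with
`α₂`; then `α₂ = δ` or `α₂ - δ ∈ Δ`, and `α₂ - δ ∈ Aᗮ` is orthogonal to `H₀ ∈ A`.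
-/

open RealInnerProductSpace Finset Submodule Relation

section RootChains

variable {V : Type*} [NormedAddCommGroup V] [InnerProductSpace ℝ V]

theorem Submodule.reflection_orthogonal_span_singleton_apply (g v : V) :
    (ℝ ∙ g)ᗮ.reflection v = v - (2 * ⟪v, g⟫ / ⟪g, g⟫) • g := by
  rw [reflection_orthogonal_apply, reflection_singleton_apply, RCLike.ofReal_real_eq_id, id,
    ← real_inner_self_eq_norm_sq, real_inner_comm]
  module

theorem Submodule.sum_mem_of_mapsTo_reflection {𝕜 E : Type*} [RCLike 𝕜] [NormedAddCommGroup E]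
    [InnerProductSpace 𝕜 E] (K : Submodule 𝕜 E) [K.HasOrthogonalProjection] {s : Finset E}
    (h : Set.MapsTo K.reflection s s) : ∑ x ∈ s, x ∈ K := by
  rw [← reflection_eq_self_iff, map_sum]
  exact Finset.sum_nbij' K.reflection K.reflection h h (fun x _ => K.reflection_reflection x)
    (fun x _ => K.reflection_reflection x) (fun _ _ => rfl)

theorem Submodule.inner_sum_pos_of_sub_mem_orthogonal {K : Submodule ℝ V} {s : Finset V}
    {x : V} (hx : x ∉ Kᗮ) (hs : s.Nonempty) (hsK : ∑ v ∈ s, v ∈ K) (hsx : ∀ v ∈ s, v - x ∈ Kᗮ) :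
    0 < ⟪x, ∑ v ∈ s, v⟫ := by
  set t := ∑ v ∈ s, v
  have hn : (0 : ℝ) < #s := by exact_mod_cast hs.card_pos
  have hw : t - (#s : ℝ) • x ∈ Kᗮ := by
    simpa [sum_sub_distrib, Nat.cast_smul_eq_nsmul] using sum_mem hsx
  have ht : t ≠ 0 := by
    rintro ht
    rw [ht, zero_sub, neg_mem_iff, smul_mem_iff _ hn.ne'] at hw
    exact hx hw
  have key : ⟪t, t⟫ = #s * ⟪x, t⟫ := by
    have := inner_right_of_mem_orthogonal hsK hw
    rw [inner_sub_right, real_inner_smul_right, real_inner_comm x t] at this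
    linarith
  have : 0 < ⟪t, t⟫ := real_inner_self_pos.mpr ht
  nlinarith

def IsReflectionClosed (Δ : Set V) : Prop :=
  ∀ α ∈ Δ, ∀ β ∈ Δ, β - (2 * ⟪β, α⟫ / ⟪α, α⟫) • α ∈ Δ

def IsCrystallographic (Δ : Set V) : Prop :=
  ∀ α ∈ Δ, ∀ β ∈ Δ, ∃ m : ℤ, 2 * ⟪β, α⟫ / ⟪α, α⟫ = m

namespace IsReflectionClosed

variable {Δ : Set V}

theorem mapsTo_reflection (hΔ : IsReflectionClosed Δ) {α : V} (hα : α ∈ Δ) :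
    Set.MapsTo (ℝ ∙ α)ᗮ.reflection Δ Δ := fun β hβ => by
  simpa only [reflection_orthogonal_span_singleton_apply] using hΔ α hα β hβ

theorem neg_mem (hΔ : IsReflectionClosed Δ) {α : V} (hα : α ∈ Δ) : -α ∈ Δ := by
  simpa only [reflection_orthogonalComplement_singleton_eq_neg] using hΔ.mapsTo_reflection hα hα

/-- Cauchy–Schwarz bounds the product of the two (positive) Cartan integers by `4`: if one of
them is `1`, a reflection gives `±(a - b) ∈ Δ`; otherwise both are `2` and `a = b`. -/
theorem sub_mem_of_inner_pos (hΔ : IsReflectionClosed Δ) (hcrys : IsCrystallographic Δ)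
    {a b : V} (ha : a ∈ Δ) (hb : b ∈ Δ) (hab : 0 < ⟪a, b⟫) : a = b ∨ a - b ∈ Δ := by
  have haa : 0 < ⟪a, a⟫ := real_inner_self_pos.mpr (by rintro rfl; simp at hab)
  have hbb : 0 < ⟪b, b⟫ := real_inner_self_pos.mpr (by rintro rfl; simp at hab)
  obtain ⟨m, hm⟩ := hcrys b hb a ha
  obtain ⟨n, hn⟩ := hcrys a ha b hb
  rw [real_inner_comm] at hn
  have hm0 : 0 < m := by exact_mod_cast hm ▸ (by positivity : 0 < 2 * ⟪a, b⟫ / ⟪b, b⟫)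
  have hn0 : 0 < n := by exact_mod_cast hn ▸ (by positivity : 0 < 2 * ⟪a, b⟫ / ⟪a, a⟫)
  have hmn : m * n ≤ 4 := by
    have hcs := real_inner_mul_inner_self_le a b
    have : ((m * n : ℤ) : ℝ) = 4 * (⟪a, b⟫ * ⟪a, b⟫) / (⟪a, a⟫ * ⟪b, b⟫) := by
      push_cast [← hm, ← hn]; field_simp; ring
    have : ((m * n : ℤ) : ℝ) ≤ 4 := by
      rw [this, div_le_iff₀ (by positivity)]; nlinarith
    exact_mod_cast this
  have hcases : m = 1 ∨ n = 1 ∨ m = 2 ∧ n = 2 := by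
    have : m ≤ 4 := by nlinarith
    have : n ≤ 4 := by nlinarith
    interval_cases m <;> interval_cases n <;> simp_all
  rcases hcases with rfl | rfl | ⟨rfl, rfl⟩
  · right
    have := hΔ b hb a ha
    rwa [hm, Int.cast_one, one_smul] at this
  · right
    have hba := hΔ a ha b hb
    rw [real_inner_comm a b, hn, Int.cast_one, one_smul] at hba
    simpa using hΔ.neg_mem hba
  · left
    have hab' : ⟪a, b⟫ = ⟪b, b⟫ := by field_simp at hm; push_cast at hm; linarith
    have hba' : ⟪a, b⟫ = ⟪a, a⟫ := by field_simp at hn; push_cast at hn; linarith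
    rw [← sub_eq_zero, ← inner_self_eq_zero (𝕜 := ℝ), inner_sub_sub_self, real_inner_comm a b]
    linarith

variable {S : Set V} {g : V}

/-- Induction on `m`: `δ - g ∈ Δ` by `sub_mem_of_inner_pos`, and the reflection of `δ - g`,
namely `δ - (m - 1) • g`, lies one step `- g` above `s_g δ = δ - m • g`. -/
theorem sub_nsmul_mem_of_closed (hΔ : IsReflectionClosed Δ) (hcrys : IsCrystallographic Δ)
    (hg : g ∈ Δ) (hSΔ : S ⊆ Δ) (hgS : g ∉ S) (hsub : ∀ δ ∈ S, δ - g ∈ Δ → δ - g ∈ S)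
    (m : ℕ) {δ : V} (hδ : δ ∈ S) (hm : 2 * ⟪δ, g⟫ / ⟪g, g⟫ = m) : δ - (m : ℝ) • g ∈ S := by
  induction m using Nat.strong_induction_on generalizing δ with
  | _ m ih =>
  obtain _ | n := m
  · simpa using hδ
  have hgg : 0 < ⟪g, g⟫ := real_inner_self_pos.mpr (by rintro rfl; simp at hm; linarith)
  have hpos : 0 < ⟪δ, g⟫ := by
    have : 0 < 2 * ⟪δ, g⟫ / ⟪g, g⟫ := by rw [hm]; positivity
    rw [div_pos_iff_of_pos_right hgg] at this
    linarith
  have hδg : δ - g ∈ S := by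
    refine hsub δ hδ ((hΔ.sub_mem_of_inner_pos hcrys (hSΔ hδ) hg hpos).resolve_left ?_)
    rintro rfl
    exact hgS hδ
  obtain _ | k := n
  · simpa using hδg
  have hk : 2 * ⟪δ - g, g⟫ / ⟪g, g⟫ = k := by
    rw [inner_sub_left]
    field_simp at hm ⊢
    push_cast at hm
    linarith
  have hmid := ih k (by omega) hδg hk
  have hrefl := hΔ g hg δ (hSΔ hδ)
  rw [hm] at hrefl
  have := hsub _ hmid (by convert hrefl using 1; push_cast; module)
  convert this using 1
  push_cast
  module

theorem mapsTo_reflection_of_closed (hΔ : IsReflectionClosed Δ) (hcrys : IsCrystallographic Δ)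
    (hg : g ∈ Δ) (hSΔ : S ⊆ Δ) (hgS : g ∉ S) (hgS' : -g ∉ S)
    (hsub : ∀ δ ∈ S, δ - g ∈ Δ → δ - g ∈ S) (hadd : ∀ δ ∈ S, δ + g ∈ Δ → δ + g ∈ S) :
    Set.MapsTo (ℝ ∙ g)ᗮ.reflection S S := by
  intro δ hδ
  rw [reflection_orthogonal_span_singleton_apply]
  obtain ⟨m, hm⟩ := hcrys g hg δ (hSΔ hδ)
  obtain ⟨k, rfl | rfl⟩ := Int.eq_nat_or_neg m
  · rw [hm]
    exact_mod_cast hΔ.sub_nsmul_mem_of_closed hcrys hg hSΔ hgS hsub k hδ hm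
  · have hsub' : ∀ δ ∈ S, δ - -g ∈ Δ → δ - -g ∈ S := by
      simpa only [sub_neg_eq_add] using hadd
    have hk : 2 * ⟪δ, -g⟫ / ⟪-g, -g⟫ = k := by
      rw [inner_neg_right, inner_neg_neg, mul_neg, neg_div, hm]
      push_cast
      ring
    have := hΔ.sub_nsmul_mem_of_closed hcrys (hΔ.neg_mem hg) hSΔ hgS' hsub' k hδ hk
    rw [hm]
    convert this using 1
    push_cast
    module

end IsReflectionClosed

theorem sub_mem_of_reflTransGen {G S : Type*} [AddGroup G] [SetLike S G] [AddSubgroupClass S G]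
    {K : S} {r : G → G → Prop} (hr : ∀ x y, r x y → y - x ∈ K) {a b : G}
    (h : ReflTransGen r a b) : b - a ∈ K := by
  induction h with
  | refl => simp
  | tail _ hbc ih => simpa using add_mem (hr _ _ hbc) ih

def ChainStep (Δ : Set V) (H₀ x y : V) : Prop :=
  y ∈ Δ ∧ y - x ∈ Δ ∧ ⟪y - x, H₀⟫ = 0

def chainReachable (Δ : Set V) (H₀ a : V) : Set V :=
  {δ | ReflTransGen (ChainStep Δ H₀) a δ}

variable {Δ : Set V} {H₀ a : V}

theorem chainReachable_subset (ha : a ∈ Δ) : chainReachable Δ H₀ a ⊆ Δ := fun δ hδ => by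
  cases hδ with
  | refl => exact ha
  | tail _ h => exact h.1

theorem exists_chain_of_reflTransGen {b : V} (h : ReflTransGen (ChainStep Δ H₀) a b) :
    ∃ (ℓ : ℕ) (γ : ℕ → V),
      (∀ i < ℓ, γ i ∈ Δ ∧ ⟪γ i, H₀⟫ = 0) ∧
      (∀ r : ℕ, 1 ≤ r → r ≤ ℓ → a + ∑ i ∈ range r, γ i ∈ Δ) ∧
      a + ∑ i ∈ range ℓ, γ i = b := by
  induction h using ReflTransGen.head_induction_on with
  | refl => exact ⟨0, fun _ => 0, by simp, by omega, by simp⟩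
  | @head a c hac _ ih =>
    obtain ⟨ℓ, γ, hγ, hmem, hsum⟩ := ih
    let γ' : ℕ → V := fun | 0 => c - a | i + 1 => γ i
    have hγ' (s : ℕ) : a + ∑ i ∈ range (s + 1), γ' i = c + ∑ i ∈ range s, γ i := by
      rw [sum_range_succ']
      simp only [γ']
      abel
    refine ⟨ℓ + 1, γ', fun i hi => ?_, fun r hr hrℓ => ?_, by rw [hγ', ← hsum]⟩
    · obtain _ | i := i
      · exact hac.2
      · exact hγ i (by omega)
    · obtain _ | s := r
      · omega
      rw [hγ']
      obtain _ | s := s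
      · simpa only [sum_range_zero, add_zero] using hac.1
      · exact hmem (s + 1) (by omega) (by omega)

noncomputable def zeroRootsOrthogonal (Δ : Set V) (H₀ : V) : Submodule ℝ V :=
  ⨅ α ∈ {a : V | a ∈ Δ ∧ ⟪a, H₀⟫ = 0}, (ℝ ∙ α)ᗮ

theorem mem_orthogonal_zeroRootsOrthogonal {g : V} (hg : g ∈ Δ) (hgH : ⟪g, H₀⟫ = 0) :
    g ∈ (zeroRootsOrthogonal Δ H₀)ᗮ :=
  orthogonal_le (iInf₂_le g ⟨hg, hgH⟩) (le_orthogonal_orthogonal _ (mem_span_singleton_self g))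

theorem mem_zeroRootsOrthogonal_self : H₀ ∈ zeroRootsOrthogonal Δ H₀ := by
  simp [zeroRootsOrthogonal, mem_orthogonal_singleton_iff_inner_right]

theorem sub_mem_orthogonal_of_mem_chainReachable {δ : V} (hδ : δ ∈ chainReachable Δ H₀ a) :
    δ - a ∈ (zeroRootsOrthogonal Δ H₀)ᗮ :=
  sub_mem_of_reflTransGen (fun _ _ h => mem_orthogonal_zeroRootsOrthogonal h.2.1 h.2.2) hδ

theorem notMem_chainReachable {g : V} (haA : a ∉ (zeroRootsOrthogonal Δ H₀)ᗮ) (hg : g ∈ Δ)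
    (hgH : ⟪g, H₀⟫ = 0) : g ∉ chainReachable Δ H₀ a := by
  intro hgS
  apply haA
  simpa using sub_mem (mem_orthogonal_zeroRootsOrthogonal hg hgH)
    (sub_mem_orthogonal_of_mem_chainReachable hgS)

namespace IsReflectionClosed

theorem sum_chainReachable_mem (hΔ : IsReflectionClosed Δ) (hcrys : IsCrystallographic Δ)
    (ha : a ∈ Δ) (haA : a ∉ (zeroRootsOrthogonal Δ H₀)ᗮ)
    (hfin : (chainReachable Δ H₀ a).Finite) :
    ∑ δ ∈ hfin.toFinset, δ ∈ zeroRootsOrthogonal Δ H₀ := by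
  simp only [zeroRootsOrthogonal, mem_iInf]
  rintro g ⟨hg, hgH⟩
  refine sum_mem_of_mapsTo_reflection _ ?_
  rw [hfin.coe_toFinset]
  refine hΔ.mapsTo_reflection_of_closed hcrys hg (chainReachable_subset ha)
    (notMem_chainReachable haA hg hgH)
    (notMem_chainReachable haA (hΔ.neg_mem hg) (by simpa using hgH))
    (fun δ hδ h => hδ.tail ⟨h, ?_⟩) (fun δ hδ h => hδ.tail ⟨h, ?_⟩)
  · simpa [hgH] using hΔ.neg_mem hg
  · simpa [hgH] using hg

theorem mem_chainReachable_of_sub_mem_orthogonal (hΔ : IsReflectionClosed Δ)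
    (hcrys : IsCrystallographic Δ) (hΔfin : Δ.Finite) {b : V} (ha : a ∈ Δ) (hb : b ∈ Δ)
    (hab : b - a ∈ (zeroRootsOrthogonal Δ H₀)ᗮ) (haA : a ∉ (zeroRootsOrthogonal Δ H₀)ᗮ) :
    b ∈ chainReachable Δ H₀ a := by
  have hfin := hΔfin.subset (chainReachable_subset (H₀ := H₀) ha)
  have hbδ (δ : V) (hδ : δ ∈ chainReachable Δ H₀ a) : δ - b ∈ (zeroRootsOrthogonal Δ H₀)ᗮ := by
    simpa using sub_mem (sub_mem_orthogonal_of_mem_chainReachable hδ) hab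
  obtain ⟨δ, hδ, hpos⟩ : ∃ δ ∈ hfin.toFinset, 0 < ⟪b, δ⟫ := by
    refine exists_lt_of_sum_lt ?_
    rw [sum_const_zero, ← inner_sum]
    refine inner_sum_pos_of_sub_mem_orthogonal (fun h => haA ?_) ⟨a, hfin.mem_toFinset.mpr .refl⟩
      (hΔ.sum_chainReachable_mem hcrys ha haA hfin) fun δ hδ => hbδ δ (hfin.mem_toFinset.mp hδ)
    simpa using sub_mem h hab
  rw [hfin.mem_toFinset] at hδ
  rcases hΔ.sub_mem_of_inner_pos hcrys hb (chainReachable_subset ha hδ) hpos with rfl | h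
  · exact hδ
  · refine hδ.tail ⟨hb, h, ?_⟩
    rw [← neg_sub, inner_neg_left, neg_eq_zero]
    exact inner_left_of_mem_orthogonal mem_zeroRootsOrthogonal_self (hbδ δ hδ)

end IsReflectionClosed

end RootChains

theorem stmt12_general {V : Type*} [NormedAddCommGroup V] [InnerProductSpace ℝ V]
    [FiniteDimensional ℝ V]
    (Δ : Finset V)
    (hrefl : ∀ α ∈ Δ, ∀ β ∈ Δ, β - (2 * ⟪β, α⟫ / ⟪α, α⟫) • α ∈ Δ)
    (hcrys : ∀ α ∈ Δ, ∀ β ∈ Δ, ∃ m : ℤ, 2 * ⟪β, α⟫ / ⟪α, α⟫ = (m : ℝ))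
    (H₀ : V) (A : Submodule ℝ V)
    (hA : A = ⨅ α ∈ {a : V | a ∈ Δ ∧ ⟪a, H₀⟫ = 0}, (Submodule.span ℝ {α})ᗮ)
    (α₁ α₂ : V) (h₁ : α₁ ∈ Δ) (h₂ : α₂ ∈ Δ)
    (hproj : A.orthogonalProjectionOnto α₁ = A.orthogonalProjectionOnto α₂)
    (hne : (A.orthogonalProjectionOnto α₁ : V) ≠ 0) :
    ∃ (ℓ : ℕ) (γ : ℕ → V),
      (∀ i < ℓ, γ i ∈ Δ ∧ ⟪γ i, H₀⟫ = 0) ∧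
      (∀ r : ℕ, 1 ≤ r → r ≤ ℓ → α₁ + ∑ i ∈ Finset.range r, γ i ∈ Δ) ∧
      α₁ + ∑ i ∈ Finset.range ℓ, γ i = α₂ := by
  have hA' : A = zeroRootsOrthogonal (Δ : Set V) H₀ := hA
  subst hA'
  refine exists_chain_of_reflTransGen (IsReflectionClosed.mem_chainReachable_of_sub_mem_orthogonal
    hrefl hcrys Δ.finite_toSet h₁ h₂ ?_ ?_)
  · rw [← orthogonalProjectionOnto_eq_zero_iff, map_sub, hproj, sub_self]
  · rwa [ne_eq, ZeroMemClass.coe_eq_zero, orthogonalProjectionOnto_eq_zero_iff] at hne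

/-- Chains of roots (Proposition on good sequences of roots).  Let `Δ` be a finite
(possibly non-reduced) crystallographic root system in a finite-dimensional real inner
product space `V`, fix `H₀ ∈ V`, let `A = ⋂_{α ∈ Δ⁰} α^⊥` where
`Δ⁰ = {α ∈ Δ : ⟨α, H₀⟩ = 0}`, and let `π_A` be the orthogonal projection onto `A`.
If `α₁, α₂ ∈ Δ` have the same nonzero projection on `A`, then `α₂` can be reached from
`α₁` by successively adding roots of `Δ⁰`, staying inside `Δ` at every step. -/
theorem stmt12 {V : Type*} [NormedAddCommGroup V] [InnerProductSpace ℝ V]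
    [FiniteDimensional ℝ V]
    (Δ : Finset V) (hΔ0 : (0 : V) ∉ Δ)
    (hrefl : ∀ α ∈ Δ, ∀ β ∈ Δ, β - (2 * ⟪β, α⟫ / ⟪α, α⟫) • α ∈ Δ)
    (hcrys : ∀ α ∈ Δ, ∀ β ∈ Δ, ∃ m : ℤ, 2 * ⟪β, α⟫ / ⟪α, α⟫ = (m : ℝ))
    (H₀ : V) (A : Submodule ℝ V)
    (hA : A = ⨅ α ∈ {a : V | a ∈ Δ ∧ ⟪a, H₀⟫ = 0}, (Submodule.span ℝ {α})ᗮ)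
    (α₁ α₂ : V) (h₁ : α₁ ∈ Δ) (h₂ : α₂ ∈ Δ)
    (hproj : A.orthogonalProjectionOnto α₁ = A.orthogonalProjectionOnto α₂)
    (hne : (A.orthogonalProjectionOnto α₁ : V) ≠ 0) :
    ∃ (ℓ : ℕ) (γ : ℕ → V),
      (∀ i < ℓ, γ i ∈ Δ ∧ ⟪γ i, H₀⟫ = 0) ∧
      (∀ r : ℕ, 1 ≤ r → r ≤ ℓ → α₁ + ∑ i ∈ Finset.range r, γ i ∈ Δ) ∧
      α₁ + ∑ i ∈ Finset.range ℓ, γ i = α₂ :=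
  stmt12_general Δ hrefl hcrys H₀ A hA α₁ α₂ h₁ h₂ hproj hne
end
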